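/- arXiv:2505.08549 — 6 statements merged into one kernel-verified Lean document; each statement's English description precedes it below -/
import Mathlib

section
/- Let p be a prime and f = a_0 + a_1 x + ... + a_n x^n ∈ ℤ[x] a primitive polynomial of degree n ≥ 1 such that (i) p does not divide a_n, (ii) v_p(a_0)/n < v_p(a_i)/(n-i) for each i = 1, ..., n-1 with a_i ≠ 0, and (iii) gcd(v_p(a_0), n) = 1. Then f is irreducible in ℤ[x]. -/
open Polynomial

/-!
Let `μ = v_p(a₀)` and `c = p ^ (-μ / n)`. Hypotheses (i) and (ii) say that the Newton polygon of
`f` at `p` is the single segment from `(0, μ)` to `(n, 0)`; equivalently, the `p`-adic Gauss norm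
of `f` at radius `c` is attained at both `a₀` and `aₙ`. The Gauss norm of a nonarchimedean
absolute value is multiplicative, so every factor of `f` in `ℚ[X]` inherits this property. For a
monic factor `g` of degree `r` this gives `n * v_p(g(0)) = μ * r`, hence `n ∣ r` by (iii).
Gauss's lemma transfers irreducibility from `ℚ[X]` back to the primitive `f ∈ ℤ[X]`.
-/

namespace Polynomial

lemma gaussNorm_le_of_forall_le {R F : Type*} [Semiring R] [FunLike F R ℝ] [ZeroHomClass F R ℝ]
    {v : F} {c B : ℝ} {f : R[X]} (h : ∀ i, v (f.coeff i) * c ^ i ≤ B) : f.gaussNorm v c ≤ B := by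
  obtain ⟨i, hi⟩ := exists_eq_gaussNorm v c f
  exact hi ▸ h i

variable {R : Type*} [Ring R] {v : AbsoluteValue R ℝ} {c : ℝ}

/-- With points `(i, -log (v (f.coeff i)))`, the Newton polygon of `f` is a single segment of
slope `log c`. -/
def IsPure (v : AbsoluteValue R ℝ) (c : ℝ) (f : R[X]) : Prop :=
  v (f.coeff 0) = f.gaussNorm v c ∧ v f.leadingCoeff * c ^ f.natDegree = f.gaussNorm v c

lemma eq_gaussNorm_of_mul_eq_gaussNorm_mul (hna : IsNonarchimedean v) (hc : 0 < c) {g h : R[X]}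
    {i j : ℕ} (hgi : g.coeff i ≠ 0) (hhj : h.coeff j ≠ 0)
    (hgh : v (g.coeff i) * c ^ i * (v (h.coeff j) * c ^ j) = (g * h).gaussNorm v c) :
    v (g.coeff i) * c ^ i = g.gaussNorm v c := by
  rw [gaussNorm_mul hna hc] at hgh
  have hg_pos : 0 < v (g.coeff i) * c ^ i := mul_pos (v.pos hgi) (pow_pos hc i)
  have hh_pos : 0 < v (h.coeff j) * c ^ j := mul_pos (v.pos hhj) (pow_pos hc j)
  have hh_le := le_gaussNorm v h hc.le j
  exact ((mul_eq_mul_iff_eq_and_eq_of_pos (le_gaussNorm v g hc.le i) hh_le hg_pos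
    (hh_pos.trans_le hh_le)).1 hgh).1

theorem IsPure.of_mul [NoZeroDivisors R] (hna : IsNonarchimedean v) (hc : 0 < c) {g h : R[X]}
    (hgh : IsPure v c (g * h)) (h0 : (g * h).coeff 0 ≠ 0) : IsPure v c g := by
  rw [mul_coeff_zero] at h0
  have hg : g ≠ 0 := by rintro rfl; simp at h0
  have hh : h ≠ 0 := by rintro rfl; simp at h0
  constructor
  · simpa using eq_gaussNorm_of_mul_eq_gaussNorm_mul hna hc (i := 0) (j := 0)
      (left_ne_zero_of_mul h0) (right_ne_zero_of_mul h0) (by simpa [mul_coeff_zero] using hgh.1)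
  · refine eq_gaussNorm_of_mul_eq_gaussNorm_mul hna hc (leadingCoeff_ne_zero.2 hg)
      (leadingCoeff_ne_zero.2 hh) ?_
    rw [coeff_natDegree, coeff_natDegree, ← hgh.2, leadingCoeff_mul, natDegree_mul hg hh,
      v.map_mul, pow_add]
    ring

end Polynomial

namespace Rat.AbsoluteValue

variable {p : ℕ} [Fact p.Prime]

lemma isNonarchimedean_padic : IsNonarchimedean (padic p) := fun x y => by
  simpa using padicNorm.nonarchimedean (p := p) (q := x) (r := y)

lemma padic_eq_rpow {a : ℚ} (ha : a ≠ 0) :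
    padic p a = (p : ℝ) ^ (-(padicValRat p a : ℝ)) := by
  rw [padic_eq_padicNorm, padicNorm.eq_zpow_of_nonzero ha, ← Int.cast_neg, Real.rpow_intCast]
  push_cast
  rfl

lemma padic_mul_rpow_pow {a : ℚ} (ha : a ≠ 0) (s : ℝ) (i : ℕ) :
    padic p a * ((p : ℝ) ^ (-s)) ^ i = (p : ℝ) ^ (-(padicValRat p a + s * i)) := by
  have hp : (0 : ℝ) < p := Nat.cast_pos.2 (Fact.out : p.Prime).pos
  rw [padic_eq_rpow ha, ← Real.rpow_mul_natCast hp.le, ← Real.rpow_add hp]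
  ring_nf

end Rat.AbsoluteValue

open Rat.AbsoluteValue

theorem Polynomial.IsPure.padicValRat_coeff_zero {p : ℕ} [Fact p.Prime] {s : ℝ} {q : ℚ[X]}
    (h : IsPure (padic p) ((p : ℝ) ^ (-s)) q) (hq : q.Monic) (h0 : q.coeff 0 ≠ 0) :
    (padicValRat p (q.coeff 0) : ℝ) = s * q.natDegree := by
  have hp : (1 : ℝ) < p := by exact_mod_cast (Fact.out : p.Prime).one_lt
  have := h.1.trans h.2.symm
  rw [hq.leadingCoeff, map_one, one_mul, padic_eq_rpow h0, ← Real.rpow_mul_natCast (by positivity),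
    Real.rpow_right_inj (zero_lt_one.trans hp) hp.ne'] at this
  linarith

lemma padicValInt_coeff_zero_mul_le {p : ℕ} {f : ℤ[X]} {n : ℕ} (hn : f.natDegree = n)
    (h2 : ∀ i, 1 ≤ i → i < n → f.coeff i ≠ 0 →
      padicValInt p (f.coeff 0) * (n - i) < padicValInt p (f.coeff i) * n)
    {i : ℕ} (hi : f.coeff i ≠ 0) :
    padicValInt p (f.coeff 0) * n ≤
      padicValInt p (f.coeff i) * n + padicValInt p (f.coeff 0) * i := by
  rcases Nat.eq_zero_or_pos i with rfl | hi0
  · simp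
  rcases (hn ▸ le_natDegree_of_ne_zero hi : i ≤ n).lt_or_eq with hin | rfl
  · have := h2 i hi0 hin hi
    obtain ⟨k, rfl⟩ := Nat.exists_eq_add_of_lt hin
    rw [show i + k + 1 - i = k + 1 by omega] at this
    nlinarith
  · exact Nat.le_add_left _ _

theorem isPure_padic_map_of_dumas {p : ℕ} [Fact p.Prime] {f : ℤ[X]} {n : ℕ}
    (hn : f.natDegree = n) (hn0 : n ≠ 0) (h1 : ¬ (p : ℤ) ∣ f.coeff n)
    (h2 : ∀ i, 1 ≤ i → i < n → f.coeff i ≠ 0 →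
      padicValInt p (f.coeff 0) * (n - i) < padicValInt p (f.coeff i) * n)
    (hf0 : f.coeff 0 ≠ 0) :
    IsPure (padic p) ((p : ℝ) ^ (-(padicValInt p (f.coeff 0) / n : ℝ)))
      (f.map (Int.castRingHom ℚ)) := by
  set μ := padicValInt p (f.coeff 0)
  set c := (p : ℝ) ^ (-(μ / n : ℝ))
  have hp : (1 : ℝ) < p := by exact_mod_cast (Fact.out : p.Prime).one_lt
  have hterm : ∀ i, f.coeff i ≠ 0 → padic p ((f.map (Int.castRingHom ℚ)).coeff i) * c ^ i =
      (p : ℝ) ^ (-(padicValInt p (f.coeff i) + μ / n * i : ℝ)) := fun i hi => by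
    rw [coeff_map, eq_intCast, padic_mul_rpow_pow (Int.cast_ne_zero.2 hi), padicValRat.of_int]
    push_cast
    rfl
  have hterm0 : padic p ((f.map (Int.castRingHom ℚ)).coeff 0) = (p : ℝ) ^ (-(μ : ℝ)) := by
    simpa using hterm 0 hf0
  have hG : (f.map (Int.castRingHom ℚ)).gaussNorm (padic p) c = (p : ℝ) ^ (-(μ : ℝ)) := by
    refine le_antisymm (gaussNorm_le_of_forall_le fun i => ?_) ?_
    · by_cases hi : f.coeff i = 0
      · simp [hi]
      have hle : (μ * n : ℝ) ≤ padicValInt p (f.coeff i) * n + μ * i := by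
        exact_mod_cast padicValInt_coeff_zero_mul_le hn h2 hi
      rw [hterm i hi, Real.rpow_le_rpow_left_iff hp, neg_le_neg_iff, div_mul_eq_mul_div,
        ← sub_le_iff_le_add', le_div_iff₀ (by positivity)]
      linarith
    · have := le_gaussNorm (padic p) (f.map (Int.castRingHom ℚ)) (by positivity : 0 ≤ c) 0
      rwa [pow_zero, mul_one, hterm0] at this
  refine ⟨hterm0.trans hG.symm, ?_⟩
  rw [hG, leadingCoeff, natDegree_map_eq_of_injective (RingHom.injective_int _), hn,
    hterm n (fun h => h1 (h ▸ dvd_zero _)), padicValInt.eq_zero_of_not_dvd h1]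
  simp [hn0]

/-- Dumas irreducibility criterion specialized to ℤ. -/
theorem dumas_irreducible (p : ℕ) (hp : p.Prime) (f : Polynomial ℤ) (n : ℕ)
    (hn : f.natDegree = n) (hn1 : 1 ≤ n) (hprim : f.IsPrimitive)
    (h1 : ¬ (p : ℤ) ∣ f.coeff n)
    (h2 : ∀ i, 1 ≤ i → i < n → f.coeff i ≠ 0 →
      padicValInt p (f.coeff 0) * (n - i) < padicValInt p (f.coeff i) * n)
    (h3 : Nat.gcd (padicValInt p (f.coeff 0)) n = 1) :
    Irreducible f := by
  have : Fact p.Prime := ⟨hp⟩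
  have hdeg : (f.map (Int.castRingHom ℚ)).natDegree = n := by
    rw [natDegree_map_eq_of_injective (RingHom.injective_int _), hn]
  have hF0 : f.map (Int.castRingHom ℚ) ≠ 0 := fun h => by simp [h] at hdeg; omega
  rw [IsPrimitive.Int.irreducible_iff_irreducible_map_cast hprim,
    irreducible_iff_lt_natDegree_lt hF0 (not_isUnit_of_natDegree_pos _ (by omega))]
  rintro q hq hqdeg ⟨g, hqg⟩
  rw [Finset.mem_Ioc, hdeg] at hqdeg
  have hf0 : f.coeff 0 ≠ 0 := by
    intro h
    rw [h, padicValInt.zero, Nat.gcd_zero_left] at h3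
    omega
  have hqg0 : (q * g).coeff 0 ≠ 0 := by simpa [← hqg] using hf0
  have hq_pure := (hqg ▸ isPure_padic_map_of_dumas hn (by omega) h1 h2 hf0).of_mul
    isNonarchimedean_padic (Real.rpow_pos_of_pos (by exact_mod_cast hp.pos) _) hqg0
  have hval := hq_pure.padicValRat_coeff_zero hq (left_ne_zero_of_mul (mul_coeff_zero q g ▸ hqg0))
  rw [div_mul_eq_mul_div, eq_div_iff (by positivity)] at hval
  have hdvd : n ∣ padicValInt p (f.coeff 0) * q.natDegree := by
    rw [← Int.natCast_dvd_natCast]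
    exact ⟨padicValRat p (q.coeff 0), by exact_mod_cast hval.symm.trans (mul_comm _ _)⟩
  have := Nat.le_of_dvd hqdeg.1 ((Nat.Coprime.symm h3).dvd_of_dvd_mul_left hdvd)
  omega
end

section
/- Let p be a prime and f = a_0 + a_1 x + ... + a_n x^n ∈ ℤ[x] a primitive polynomial such that there exist indices j and ℓ with 1 ≤ ℓ+1 ≤ j ≤ n for which (i) p ∤ a_j, (ii) v_p(a_ℓ)/(j-ℓ) < v_p(a_i)/(j-i) for each i = 0, 1, ..., j-1 with i ≠ ℓ (vacuous when a_i = 0), and (iii) gcd(v_p(a_ℓ), j-ℓ) = 1. Then in any factorization f = f₁ f₂ in ℤ[x], one of the factors has degree ≥ j - ℓ. -/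
open Polynomial Finset

section DumasAux
variable {p : ℕ} [hp : Fact p.Prime]

private lemma le_padicValInt_of_dvd {c : ℕ} {a : ℤ} (ha : a ≠ 0) (h : (p:ℤ)^c ∣ a) :
    c ≤ padicValInt p a :=
  ((padicValInt_dvd_iff c a).mp h).resolve_left ha

private lemma dvd_of_le_padicValInt {c : ℕ} {a : ℤ} (h : c ≤ padicValInt p a) :
    (p:ℤ)^c ∣ a :=
  (padicValInt_dvd_iff c a).mpr (Or.inr h)

private lemma prod_coeff_exact (g h : Polynomial ℤ) (a c : ℕ)
    (hga : g.coeff a ≠ 0) (hhc : h.coeff c ≠ 0)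
    (H : ∀ i j : ℕ, i + j = a + c → ¬(i = a ∧ j = c) → g.coeff i * h.coeff j ≠ 0 →
      padicValInt p (g.coeff a) + padicValInt p (h.coeff c)
        < padicValInt p (g.coeff i) + padicValInt p (h.coeff j)) :
    (g * h).coeff (a + c) ≠ 0 ∧
      padicValInt p ((g * h).coeff (a + c))
        = padicValInt p (g.coeff a) + padicValInt p (h.coeff c) := by
  classical
  set N := padicValInt p (g.coeff a) + padicValInt p (h.coeff c) with hN
  have hmem : ((a, c) : ℕ × ℕ) ∈ antidiagonal (a + c) := by simp
  have hcoeff : (g * h).coeff (a + c)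
      = g.coeff a * h.coeff c + ∑ x ∈ (antidiagonal (a+c)).erase (a,c),
          g.coeff x.1 * h.coeff x.2 := by
    rw [coeff_mul, ← Finset.add_sum_erase _ _ hmem]
  have hspec_ne : g.coeff a * h.coeff c ≠ 0 := mul_ne_zero hga hhc
  have hspecv : padicValInt p (g.coeff a * h.coeff c) = N := padicValInt.mul hga hhc
  have hrest : (p:ℤ)^(N+1) ∣ ∑ x ∈ (antidiagonal (a+c)).erase (a,c),
      g.coeff x.1 * h.coeff x.2 := by
    refine Finset.dvd_sum fun x hx => ?_
    by_cases hx0 : g.coeff x.1 * h.coeff x.2 = 0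
    · simp [hx0]
    · have hxad := Finset.mem_of_mem_erase hx
      have hxsum : x.1 + x.2 = a + c := Finset.HasAntidiagonal.mem_antidiagonal.mp hxad
      have hxne : ¬ (x.1 = a ∧ x.2 = c) := fun hcon =>
        Finset.ne_of_mem_erase hx (Prod.ext hcon.1 hcon.2)
      have hlt := H x.1 x.2 hxsum hxne hx0
      have h1 : g.coeff x.1 ≠ 0 := left_ne_zero_of_mul hx0
      have h2 : h.coeff x.2 ≠ 0 := right_ne_zero_of_mul hx0
      refine dvd_of_le_padicValInt ?_
      rw [padicValInt.mul h1 h2]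
      omega
  have hsplit : g.coeff a * h.coeff c = (g*h).coeff (a+c)
      - ∑ x ∈ (antidiagonal (a+c)).erase (a,c), g.coeff x.1 * h.coeff x.2 := by
    rw [hcoeff]; ring
  have hnotdvd : ¬ (p:ℤ)^(N+1) ∣ g.coeff a * h.coeff c := by
    intro hd
    have := le_padicValInt_of_dvd hspec_ne hd
    omega
  have hsum_ne : (g * h).coeff (a + c) ≠ 0 := by
    intro h0
    apply hnotdvd
    rw [hsplit, h0, zero_sub]
    exact (dvd_neg).mpr hrest
  refine ⟨hsum_ne, ?_⟩
  have hd1 : (p:ℤ)^N ∣ (g*h).coeff (a+c) := by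
    rw [hcoeff]
    exact dvd_add (dvd_of_le_padicValInt hspecv.ge) ((pow_dvd_pow _ (Nat.le_succ N)).trans hrest)
  have hd2 : ¬ (p:ℤ)^(N+1) ∣ (g*h).coeff (a+c) := by
    intro hd
    exact hnotdvd (hsplit ▸ dvd_sub hd hrest)
  have hle := le_padicValInt_of_dvd hsum_ne hd1
  by_contra hne
  exact hd2 (dvd_of_le_padicValInt (by omega))

private lemma prod_coeff_lb (e m : ℕ) (he : 0 < e) (g h : Polynomial ℤ) (k c : ℕ)
    (H : ∀ i j : ℕ, i + j = k → g.coeff i * h.coeff j ≠ 0 →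
      c ≤ (e * padicValInt p (g.coeff i) + m * i) + (e * padicValInt p (h.coeff j) + m * j))
    (hk : (g*h).coeff k ≠ 0) :
    c ≤ e * padicValInt p ((g*h).coeff k) + m * k := by
  by_cases hcm : c ≤ m * k
  · omega
  push_neg at hcm
  set d := c - m * k with hd
  set cc := (d + e - 1) / e with hcc
  have hdvd : (p:ℤ)^cc ∣ (g*h).coeff k := by
    rw [coeff_mul]
    refine Finset.dvd_sum fun x hx => ?_
    by_cases hx0 : g.coeff x.1 * h.coeff x.2 = 0
    · simp [hx0]
    · have hxsum : x.1 + x.2 = k := Finset.HasAntidiagonal.mem_antidiagonal.mp hx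
      have h1 : g.coeff x.1 ≠ 0 := left_ne_zero_of_mul hx0
      have h2 : h.coeff x.2 ≠ 0 := right_ne_zero_of_mul hx0
      have hHx := H x.1 x.2 hxsum hx0
      have hmk : m * x.1 + m * x.2 = m * k := by rw [← Nat.mul_add, hxsum]
      have hsum : d ≤ e * (padicValInt p (g.coeff x.1) + padicValInt p (h.coeff x.2)) := by
        rw [Nat.mul_add]; omega
      refine dvd_of_le_padicValInt ?_
      rw [padicValInt.mul h1 h2]
      rw [hcc]
      refine (Nat.div_le_iff_le_mul_add_pred he).mpr ?_
      obtain ⟨E, hE⟩ : ∃ E, e * (padicValInt p (g.coeff x.1) + padicValInt p (h.coeff x.2)) = E :=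
        ⟨_, rfl⟩
      rw [hE] at hsum ⊢
      omega
  have hle : cc ≤ padicValInt p ((g*h).coeff k) := le_padicValInt_of_dvd hk hdvd
  have h1 : d + e - 1 ≤ e * cc + (e - 1) := (Nat.div_le_iff_le_mul_add_pred he).mp le_rfl
  have h2 : e * cc ≤ e * padicValInt p ((g*h).coeff k) := Nat.mul_le_mul_left e hle
  obtain ⟨E1, hE1⟩ : ∃ E, e * cc = E := ⟨_, rfl⟩
  obtain ⟨E2, hE2⟩ : ∃ E, e * padicValInt p ((g*h).coeff k) = E := ⟨_, rfl⟩
  rw [hE1] at h1 h2; rw [hE2] at h2 ⊢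
  omega


private lemma extract_achievers (p e m : ℕ) (g : Polynomial ℤ) (hg : g ≠ 0) :
    ∃ w a b : ℕ, a ≤ b ∧ g.coeff a ≠ 0 ∧ g.coeff b ≠ 0 ∧
      e * padicValInt p (g.coeff a) + m * a = w ∧
      e * padicValInt p (g.coeff b) + m * b = w ∧
      (∀ i, g.coeff i ≠ 0 → w ≤ e * padicValInt p (g.coeff i) + m * i) ∧
      (∀ i, i < a → g.coeff i ≠ 0 → w < e * padicValInt p (g.coeff i) + m * i) ∧
      (∀ i, b < i → g.coeff i ≠ 0 → w < e * padicValInt p (g.coeff i) + m * i) := by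
  classical
  have hsupp : g.support.Nonempty := Polynomial.nonempty_support_iff.mpr hg
  set wt : ℕ → ℕ := fun i => e * padicValInt p (g.coeff i) + m * i with hwt
  have himg : (g.support.image wt).Nonempty := hsupp.image _
  set w := (g.support.image wt).min' himg with hw
  have hT : (g.support.filter (fun i => wt i = w)).Nonempty := by
    obtain ⟨x, hx, hxw⟩ := Finset.mem_image.mp ((g.support.image wt).min'_mem himg)
    exact ⟨x, Finset.mem_filter.mpr ⟨hx, hxw⟩⟩
  set T := g.support.filter (fun i => wt i = w) with hTdef
  refine ⟨w, T.min' hT, T.max' hT, T.min'_le _ (T.max'_mem hT), ?_, ?_, ?_, ?_, ?_, ?_, ?_⟩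
  · exact Polynomial.mem_support_iff.mp (Finset.mem_filter.mp (T.min'_mem hT)).1
  · exact Polynomial.mem_support_iff.mp (Finset.mem_filter.mp (T.max'_mem hT)).1
  · exact (Finset.mem_filter.mp (T.min'_mem hT)).2
  · exact (Finset.mem_filter.mp (T.max'_mem hT)).2
  · intro i hi
    exact Finset.min'_le _ _ (Finset.mem_image_of_mem wt (Polynomial.mem_support_iff.mpr hi))
  · intro i hia hi
    have hle : w ≤ wt i :=
      Finset.min'_le _ _ (Finset.mem_image_of_mem wt (Polynomial.mem_support_iff.mpr hi))
    rcases eq_or_lt_of_le hle with heq | hlt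
    · exfalso
      have : i ∈ T := Finset.mem_filter.mpr ⟨Polynomial.mem_support_iff.mpr hi, heq.symm⟩
      exact absurd (T.min'_le _ this) (by omega)
    · exact hlt
  · intro i hib hi
    have hle : w ≤ wt i :=
      Finset.min'_le _ _ (Finset.mem_image_of_mem wt (Polynomial.mem_support_iff.mpr hi))
    rcases eq_or_lt_of_le hle with heq | hlt
    · exfalso
      have : i ∈ T := Finset.mem_filter.mpr ⟨Polynomial.mem_support_iff.mpr hi, heq.symm⟩
      exact absurd (Finset.le_max' T _ this) (by omega)
    · exact hlt

end DumasAux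


set_option maxHeartbeats 1000000 in
/-- Theorem 1 of the paper (generalized Dumas criterion), specialized to ℤ with
the p-adic valuation: any factorization of f has a factor of degree ≥ j - ℓ. -/
theorem dumas_general_factor_degree (p : ℕ) (hp : p.Prime) (f : Polynomial ℤ) (n : ℕ)
    (hn : f.natDegree = n) (hprim : f.IsPrimitive) (j ℓ : ℕ)
    (hℓj : ℓ + 1 ≤ j) (hjn : j ≤ n)
    (h1 : ¬ (p : ℤ) ∣ f.coeff j)
    (h2 : ∀ i, i < j → i ≠ ℓ → f.coeff i ≠ 0 →
      padicValInt p (f.coeff ℓ) * (j - i) < padicValInt p (f.coeff i) * (j - ℓ))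
    (h3 : Nat.gcd (padicValInt p (f.coeff ℓ)) (j - ℓ) = 1) :
    ∀ f₁ f₂ : Polynomial ℤ, f = f₁ * f₂ →
      j - ℓ ≤ f₁.natDegree ∨ j - ℓ ≤ f₂.natDegree := by
  intro f₁ f₂ hf
  haveI : Fact p.Prime := ⟨hp⟩
  have hfj : f.coeff j ≠ 0 := fun h0 => h1 (by rw [h0]; exact dvd_zero _)
  have hfne : f ≠ 0 := fun h0 => hfj (by rw [h0]; simp)
  have hf₁ : f₁ ≠ 0 := fun h0 => hfne (by rw [hf, h0, zero_mul])
  have hf₂ : f₂ ≠ 0 := fun h0 => hfne (by rw [hf, h0, mul_zero])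
  have hdeg : f₁.natDegree + f₂.natDegree = n := by
    rw [← hn, hf, Polynomial.natDegree_mul hf₁ hf₂]
  by_cases he1 : j - ℓ = 1
  · omega
  obtain ⟨m, hmdef⟩ : ∃ m, padicValInt p (f.coeff ℓ) = m := ⟨_, rfl⟩
  rw [hmdef] at h2 h3
  set e := j - ℓ with hedef
  have he : 0 < e := by omega
  have hm : 0 < m := by
    rcases Nat.eq_zero_or_pos m with h0 | h
    · rw [h0, Nat.gcd_zero_left] at h3; omega
    · exact h
  have hfℓ : f.coeff ℓ ≠ 0 := by
    intro h0
    rw [h0, padicValInt.zero] at hmdef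
    omega
  have hvj : padicValInt p (f.coeff j) = 0 := padicValInt.eq_zero_of_not_dvd h1
  have wtfℓ : e * m + m * ℓ = m * j := by
    have hjel : e + ℓ = j := by omega
    calc e * m + m * ℓ = m * (e + ℓ) := by ring
    _ = m * j := by rw [hjel]
  have hfstrict : ∀ i, i ≠ ℓ → i ≠ j → f.coeff i ≠ 0 →
      m * j < e * padicValInt p (f.coeff i) + m * i := by
    intro i hiℓ hij hi
    rcases Nat.lt_or_ge i j with hlt | hge
    · have hh := h2 i hlt hiℓ hi
      have h4 : m * (j - i) + m * i = m * j := by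
        have hji : (j - i) + i = j := by omega
        calc m * (j - i) + m * i = m * ((j - i) + i) := by ring
        _ = m * j := by rw [hji]
      rw [← h4]
      rw [Nat.mul_comm (padicValInt p (f.coeff i)) e] at hh
      exact Nat.add_lt_add_right hh _
    · have hij' : j < i := by omega
      calc m * j < m * i := mul_lt_mul_of_pos_left hij' hm
      _ ≤ e * padicValInt p (f.coeff i) + m * i := Nat.le_add_left _ _
  have hfmin : ∀ i, f.coeff i ≠ 0 → m * j ≤ e * padicValInt p (f.coeff i) + m * i := by
    intro i hi
    by_cases hiℓ : i = ℓ
    · subst hiℓ; rw [hmdef, wtfℓ]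
    · by_cases hij : i = j
      · subst hij; rw [hvj]; simp
      · exact (hfstrict i hiℓ hij hi).le
  obtain ⟨wg, a₁, b₁, hab₁, hga, hgb, hwa, hwb, hgmin, hgminlt, hgmaxlt⟩ :=
    extract_achievers p e m f₁ hf₁
  obtain ⟨wh, a₂, b₂, hab₂, hha, hhb, hwc, hwd, hhmin, hhminlt, hhmaxlt⟩ :=
    extract_achievers p e m f₂ hf₂
  -- exact valuation at the min-achiever index a₁ + a₂
  have exactA := prod_coeff_exact (p := p) f₁ f₂ a₁ a₂ hga hha (by
    intro i jj hsum hne h0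
    have h1' : f₁.coeff i ≠ 0 := left_ne_zero_of_mul h0
    have h2' : f₂.coeff jj ≠ 0 := right_ne_zero_of_mul h0
    have hcase : i < a₁ ∨ jj < a₂ := by
      by_contra hcon; push_neg at hcon; exact hne ⟨by omega, by omega⟩
    have hemul : e * (padicValInt p (f₁.coeff a₁) + padicValInt p (f₂.coeff a₂))
        < e * (padicValInt p (f₁.coeff i) + padicValInt p (f₂.coeff jj)) := by
      have hmeq : m * i + m * jj = m * a₁ + m * a₂ := by
        have e1 : m * i + m * jj = m * (i + jj) := by ring
        have e2 : m * a₁ + m * a₂ = m * (a₁ + a₂) := by ring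
        rw [e1, e2, hsum]
      rcases hcase with hc1 | hc2
      · have s1 := hgminlt i hc1 h1'
        have s2 := hhmin jj h2'
        linarith [hwa, hwc]
      · have s1 := hgmin i h1'
        have s2 := hhminlt jj hc2 h2'
        linarith [hwa, hwc]
    exact Nat.lt_of_mul_lt_mul_left hemul)
  -- exact valuation at the max-achiever index b₁ + b₂
  have exactB := prod_coeff_exact (p := p) f₁ f₂ b₁ b₂ hgb hhb (by
    intro i jj hsum hne h0
    have h1' : f₁.coeff i ≠ 0 := left_ne_zero_of_mul h0
    have h2' : f₂.coeff jj ≠ 0 := right_ne_zero_of_mul h0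
    have hcase : b₁ < i ∨ b₂ < jj := by
      by_contra hcon; push_neg at hcon; exact hne ⟨by omega, by omega⟩
    have hemul : e * (padicValInt p (f₁.coeff b₁) + padicValInt p (f₂.coeff b₂))
        < e * (padicValInt p (f₁.coeff i) + padicValInt p (f₂.coeff jj)) := by
      have hmeq : m * i + m * jj = m * b₁ + m * b₂ := by
        have e1 : m * i + m * jj = m * (i + jj) := by ring
        have e2 : m * b₁ + m * b₂ = m * (b₁ + b₂) := by ring
        rw [e1, e2, hsum]
      rcases hcase with hc1 | hc2
      · have s1 := hgmaxlt i hc1 h1'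
        have s2 := hhmin jj h2'
        linarith [hwb, hwd]
      · have s1 := hgmin i h1'
        have s2 := hhmaxlt jj hc2 h2'
        linarith [hwb, hwd]
    exact Nat.lt_of_mul_lt_mul_left hemul)
  have hAne : f.coeff (a₁ + a₂) ≠ 0 := by rw [hf]; exact exactA.1
  have hBne : f.coeff (b₁ + b₂) ≠ 0 := by rw [hf]; exact exactB.1
  have wtA : e * padicValInt p (f.coeff (a₁ + a₂)) + m * (a₁ + a₂) = wg + wh := by
    rw [hf, exactA.2]
    linarith [hwa, hwc]
  have wtB : e * padicValInt p (f.coeff (b₁ + b₂)) + m * (b₁ + b₂) = wg + wh := by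
    rw [hf, exactB.2]
    linarith [hwb, hwd]
  have lb_all : ∀ k, f.coeff k ≠ 0 →
      wg + wh ≤ e * padicValInt p (f.coeff k) + m * k := by
    intro k hk
    rw [hf] at hk ⊢
    refine prod_coeff_lb e m he f₁ f₂ k _ ?_ hk
    intro i jj _ h0
    exact Nat.add_le_add (hgmin i (left_ne_zero_of_mul h0)) (hhmin jj (right_ne_zero_of_mul h0))
  have lbA : ∀ k, k < a₁ + a₂ → f.coeff k ≠ 0 →
      wg + wh + 1 ≤ e * padicValInt p (f.coeff k) + m * k := by
    intro k hkA hk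
    rw [hf] at hk ⊢
    refine prod_coeff_lb e m he f₁ f₂ k _ ?_ hk
    intro i jj hsum h0
    have h1' : f₁.coeff i ≠ 0 := left_ne_zero_of_mul h0
    have h2' : f₂.coeff jj ≠ 0 := right_ne_zero_of_mul h0
    have hcase : i < a₁ ∨ jj < a₂ := by omega
    rcases hcase with hc1 | hc2
    · have s1 := hgminlt i hc1 h1'
      have s2 := hhmin jj h2'
      omega
    · have s1 := hgmin i h1'
      have s2 := hhminlt jj hc2 h2'
      omega
  have lbB : ∀ k, b₁ + b₂ < k → f.coeff k ≠ 0 →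
      wg + wh + 1 ≤ e * padicValInt p (f.coeff k) + m * k := by
    intro k hkB hk
    rw [hf] at hk ⊢
    refine prod_coeff_lb e m he f₁ f₂ k _ ?_ hk
    intro i jj hsum h0
    have h1' : f₁.coeff i ≠ 0 := left_ne_zero_of_mul h0
    have h2' : f₂.coeff jj ≠ 0 := right_ne_zero_of_mul h0
    have hcase : b₁ < i ∨ b₂ < jj := by omega
    rcases hcase with hc1 | hc2
    · have s1 := hgmaxlt i hc1 h1'
      have s2 := hhmin jj h2'
      omega
    · have s1 := hgmin i h1'
      have s2 := hhmaxlt jj hc2 h2'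
      omega
  have hsum_val : wg + wh = m * j := by
    have u1 : m * j ≤ wg + wh := by
      have := hfmin (a₁ + a₂) hAne
      omega
    have u2 : wg + wh ≤ m * j := by
      have hl := lb_all ℓ hfℓ
      rw [hmdef] at hl
      omega
    omega
  have hAeq : a₁ + a₂ = ℓ := by
    rcases Nat.lt_trichotomy (a₁ + a₂) ℓ with hlt | heq | hgt
    · exfalso
      have := hfstrict (a₁ + a₂) (by omega) (by omega) hAne
      omega
    · exact heq
    · exfalso
      have hl := lbA ℓ hgt hfℓ
      rw [hmdef] at hl
      omega
  have hBeq : b₁ + b₂ = j := by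
    rcases Nat.lt_trichotomy (b₁ + b₂) j with hlt | heq | hgt
    · exfalso
      by_cases hbl : b₁ + b₂ = ℓ
      · have hl := lbB j (by omega) hfj
        rw [hvj] at hl
        omega
      · have := hfstrict (b₁ + b₂) hbl (by omega) hBne
        omega
    · exact heq
    · exfalso
      have := hfstrict (b₁ + b₂) (by omega) (by omega) hBne
      omega
  -- e divides the spreads
  have hdvd1 : e ∣ m * (b₁ - a₁) := by
    have keyz : (e : ℤ) * padicValInt p (f₁.coeff a₁) + m * a₁
        = (e : ℤ) * padicValInt p (f₁.coeff b₁) + m * b₁ := by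
      exact_mod_cast congrArg (Nat.cast : ℕ → ℤ) (hwa.trans hwb.symm)
    have hz : (e : ℤ) ∣ ((m * (b₁ - a₁) : ℕ) : ℤ) := by
      refine ⟨(padicValInt p (f₁.coeff a₁) : ℤ) - padicValInt p (f₁.coeff b₁), ?_⟩
      push_cast [Nat.cast_sub hab₁]
      linear_combination -keyz
    exact_mod_cast hz
  have hdvd2 : e ∣ m * (b₂ - a₂) := by
    have keyz : (e : ℤ) * padicValInt p (f₂.coeff a₂) + m * a₂
        = (e : ℤ) * padicValInt p (f₂.coeff b₂) + m * b₂ := by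
      exact_mod_cast congrArg (Nat.cast : ℕ → ℤ) (hwc.trans hwd.symm)
    have hz : (e : ℤ) ∣ ((m * (b₂ - a₂) : ℕ) : ℤ) := by
      refine ⟨(padicValInt p (f₂.coeff a₂) : ℤ) - padicValInt p (f₂.coeff b₂), ?_⟩
      push_cast [Nat.cast_sub hab₂]
      linear_combination -keyz
    exact_mod_cast hz
  have hcop : Nat.Coprime e m := Nat.Coprime.symm h3
  have hd1 : e ∣ b₁ - a₁ := hcop.dvd_of_dvd_mul_left hdvd1
  have hd2 : e ∣ b₂ - a₂ := hcop.dvd_of_dvd_mul_left hdvd2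
  have hsum2 : (b₁ - a₁) + (b₂ - a₂) = e := by
    clear * - hAeq hBeq hab₁ hab₂ hℓj
    omega
  obtain ⟨u, hu⟩ := hd1
  obtain ⟨t, ht⟩ := hd2
  have hut : u + t = 1 := by
    have hh : e * (u + t) = e * 1 := by
      rw [Nat.mul_add, Nat.mul_one, ← hu, ← ht]
      exact hsum2
    exact Nat.eq_of_mul_eq_mul_left he hh
  rcases (by clear * - hut; omega : u = 1 ∧ t = 0 ∨ u = 0 ∧ t = 1) with ⟨hu1, _⟩ | ⟨_, ht1⟩
  · left
    have hle : e ≤ b₁ := by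
      rw [hu1, Nat.mul_one] at hu
      clear * - hu
      omega
    exact hle.trans (Polynomial.le_natDegree_of_ne_zero hgb)
  · right
    have hle : e ≤ b₂ := by
      rw [ht1, Nat.mul_one] at ht
      clear * - ht
      omega
    exact hle.trans (Polynomial.le_natDegree_of_ne_zero hhb)
end

section
/- Let p be a prime and f = a_0 + a_1 x + ... + a_n x^n ∈ ℤ[x] a primitive polynomial such that there exist indices j and ℓ with 1 ≤ ℓ+1 ≤ j ≤ n for which (i) p ∤ a_j, (ii) v_p(a_ℓ) ≤ ((j-ℓ)/j)·v_p(a_i) for each i = 0, 1, ..., j-1 with i ≠ ℓ and a_i ≠ 0, and (iii) gcd(v_p(a_ℓ), j-ℓ) = 1. Then any factorization f = f₁ f₂ in ℤ[x] has a factor of degree ≥ j - ℓ. -/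
/-!
Weigh the point `(k, v_p(a_k))` of the Newton diagram by `w(k) = (j - ℓ) v_p(a_k) + v_p(a_ℓ) k`,
i.e. against lines of slope `-v_p(a_ℓ)/(j - ℓ)`. By (ii) the least weight of `f` is
`v_p(a_ℓ) j`, attained both at `ℓ` and at `j`. A factor of degree `< j - ℓ` has a unique index
of least weight, because by (iii) distinct indices below `j - ℓ` have distinct weights modulo
`j - ℓ`; and, as in Gauss's lemma, the indices of least weight of two factors add up to a unique
index of least weight of the product. So `f` has no factorization into two factors of degree
`< j - ℓ`.
-/

open Polynomial Finset

section SlopeWeight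

variable {p d m : ℕ}

/-- The point `(k, v_p(g_k))` of the Newton diagram of `g`, measured along the normal of a
line of slope `-m/d`. -/
def slopeWeight (p d m : ℕ) (g : ℤ[X]) (k : ℕ) : ℕ :=
  d * padicValInt p (g.coeff k) + m * k

def HasUniqueMinSlopeWeight (p d m : ℕ) (g : ℤ[X]) : Prop :=
  ∃ r ∈ g.support, ∀ k ∈ g.support, k ≠ r → slopeWeight p d m g r < slopeWeight p d m g k

/-- Two indices of equal weight satisfy `m k ≡ m k' [MOD d]`, hence `k ≡ k' [MOD d]`, and both
are `< d`. -/
theorem hasUniqueMinSlopeWeight_of_natDegree_lt {g : ℤ[X]} (hcop : Nat.Coprime d m)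
    (hg : g ≠ 0) (hdeg : g.natDegree < d) : HasUniqueMinSlopeWeight p d m g := by
  obtain ⟨r, hr, hmin⟩ :=
    g.support.exists_min_image (slopeWeight p d m g) (nonempty_support_iff.mpr hg)
  refine ⟨r, hr, fun k hk hkr => (hmin k hk).lt_of_ne fun heq => hkr ?_⟩
  have hmod : m * k ≡ m * r [MOD d] := by
    simpa [slopeWeight, Nat.ModEq, Nat.mul_add_mod] using congrArg (· % d) heq.symm
  exact (Nat.ModEq.cancel_left_of_coprime hcop hmod).eq_of_lt_of_lt
    ((le_natDegree_of_mem_supp k hk).trans_lt hdeg) ((le_natDegree_of_mem_supp r hr).trans_lt hdeg)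

theorem HasUniqueMinSlopeWeight.eq_of_slopeWeight_eq {g : ℤ[X]}
    (hg : HasUniqueMinSlopeWeight p d m g) {k k' c : ℕ} (hk : k ∈ g.support)
    (hk' : k' ∈ g.support) (hwk : slopeWeight p d m g k = c) (hwk' : slopeWeight p d m g k' = c)
    (hmin : ∀ i ∈ g.support, c ≤ slopeWeight p d m g i) : k = k' := by
  obtain ⟨r, hr, hrU⟩ := hg
  have heq_r : ∀ i ∈ g.support, slopeWeight p d m g i = c → i = r := fun i hi hwi =>
    by_contra fun hne => (hrU i hi hne).not_ge (hwi ▸ hmin r hr)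
  exact (heq_r k hk hwk).trans (heq_r k' hk' hwk').symm

/-- The exponent is `⌈(W + 1 - m t) / d⌉`, the least `e` with `d e + m t > W`. -/
theorem pow_dvd_iff_lt_mul_padicValInt_add (hp : p ≠ 1) (hd : 0 < d) (t W : ℕ) (c : ℤ) :
    (p : ℤ) ^ ((W + d - m * t) / d) ∣ c ↔ c = 0 ∨ W < d * padicValInt p c + m * t := by
  rw [padicValInt_dvd_iff_of_ne_one hp, Nat.div_le_iff_le_mul_add_pred hd]
  omega

theorem slopeWeight_mul_coeff_add [Fact p.Prime] {g h : ℤ[X]} {u v : ℕ} (hu : g.coeff u ≠ 0)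
    (hv : h.coeff v ≠ 0) :
    d * padicValInt p (g.coeff u * h.coeff v) + m * (u + v) =
      slopeWeight p d m g u + slopeWeight p d m h v := by
  rw [padicValInt.mul hu hv, slopeWeight, slopeWeight]
  ring

theorem slopeWeight_add_lt_of_ne {g h : ℤ[X]} {r s u v : ℕ}
    (hrU : ∀ k ∈ g.support, k ≠ r → slopeWeight p d m g r < slopeWeight p d m g k)
    (hsU : ∀ k ∈ h.support, k ≠ s → slopeWeight p d m h s < slopeWeight p d m h k)
    (hu : u ∈ g.support) (hv : v ∈ h.support) (huv : (u, v) ≠ (r, s)) :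
    slopeWeight p d m g r + slopeWeight p d m h s <
      slopeWeight p d m g u + slopeWeight p d m h v := by
  rcases eq_or_ne u r with rfl | hur
  · have := hsU v hv fun hvs => huv (by rw [hvs])
    omega
  · have := hrU u hu hur
    rcases eq_or_ne v s with rfl | hvs
    · omega
    · have := hsU v hv hvs
      omega

/-- The coefficient of `g * h` at `r + s` is the term `g_r h_s` of weight `W` plus terms of
weight `> W`, and every other coefficient consists of terms of weight `> W` only. -/
theorem HasUniqueMinSlopeWeight.mul [Fact p.Prime] (hd : 0 < d) {g h : ℤ[X]}
    (hg : HasUniqueMinSlopeWeight p d m g) (hh : HasUniqueMinSlopeWeight p d m h) :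
    HasUniqueMinSlopeWeight p d m (g * h) := by
  obtain ⟨r, hr, hrU⟩ := hg
  obtain ⟨s, hs, hsU⟩ := hh
  set W := slopeWeight p d m g r + slopeWeight p d m h s
  have hdvd_iff := pow_dvd_iff_lt_mul_padicValInt_add (m := m) (Fact.out : p.Prime).ne_one hd
  have hrest : ∀ t, (p : ℤ) ^ ((W + d - m * t) / d) ∣
      ∑ x ∈ (antidiagonal t).erase (r, s), g.coeff x.1 * h.coeff x.2 := by
    refine fun t => dvd_sum fun x hx => (hdvd_iff t W _).mpr ?_
    obtain ⟨hxrs, hxt⟩ := mem_erase.mp hx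
    rw [HasAntidiagonal.mem_antidiagonal] at hxt
    by_cases hx₀ : g.coeff x.1 = 0 ∨ h.coeff x.2 = 0
    · exact .inl (by rcases hx₀ with h₀ | h₀ <;> simp [h₀])
    push Not at hx₀
    right
    rw [← hxt, slopeWeight_mul_coeff_add hx₀.1 hx₀.2]
    exact slopeWeight_add_lt_of_ne hrU hsU (mem_support_iff.mpr hx₀.1) (mem_support_iff.mpr hx₀.2)
      hxrs
  have hrs_ndvd : ¬ (p : ℤ) ^ ((W + d - m * (r + s)) / d) ∣ (g * h).coeff (r + s) := by
    have hmem : (r, s) ∈ antidiagonal (r + s) := HasAntidiagonal.mem_antidiagonal.mpr rfl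
    rw [coeff_mul, ← add_sum_erase _ _ hmem, dvd_add_left (hrest _), hdvd_iff,
      slopeWeight_mul_coeff_add (mem_support_iff.mp hr) (mem_support_iff.mp hs)]
    simp [mem_support_iff.mp hr, mem_support_iff.mp hs, W]
  refine ⟨r + s, mem_support_iff.mpr fun h₀ => hrs_ndvd (h₀ ▸ dvd_zero _), fun t ht htrs => ?_⟩
  have ht_dvd : (p : ℤ) ^ ((W + d - m * t) / d) ∣ (g * h).coeff t := by
    have hrs_notMem : (r, s) ∉ antidiagonal t := by
      simpa [HasAntidiagonal.mem_antidiagonal] using htrs.symm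
    rw [coeff_mul, ← erase_eq_of_notMem hrs_notMem]
    exact hrest t
  rw [hdvd_iff] at hrs_ndvd ht_dvd
  push Not at hrs_ndvd
  rw [slopeWeight, slopeWeight]
  have := ht_dvd.resolve_left (mem_support_iff.mp ht)
  omega

end SlopeWeight

theorem slopeWeight_self_sub {p : ℕ} {f : ℤ[X]} {j ℓ : ℕ} (hℓj : ℓ ≤ j) :
    slopeWeight p (j - ℓ) (padicValInt p (f.coeff ℓ)) f ℓ = padicValInt p (f.coeff ℓ) * j := by
  rw [slopeWeight, mul_comm, ← mul_add, Nat.sub_add_cancel hℓj]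

theorem le_slopeWeight_of_valuation_bound {p : ℕ} {f : ℤ[X]} {j ℓ : ℕ} (hℓj : ℓ ≤ j)
    (hbound : ∀ i, i < j → i ≠ ℓ → f.coeff i ≠ 0 →
      padicValInt p (f.coeff ℓ) * j ≤ padicValInt p (f.coeff i) * (j - ℓ))
    {i : ℕ} (hi : i ∈ f.support) :
    padicValInt p (f.coeff ℓ) * j ≤ slopeWeight p (j - ℓ) (padicValInt p (f.coeff ℓ)) f i := by
  rcases eq_or_ne i ℓ with rfl | hiℓ
  · exact (slopeWeight_self_sub hℓj).ge
  rw [slopeWeight]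
  rcases lt_or_ge i j with hij | hji
  · have := hbound i hij hiℓ (mem_support_iff.mp hi)
    nlinarith
  · nlinarith

theorem dumas_general_factor_degree_cor_general (p : ℕ) (hp : p.Prime) (f : Polynomial ℤ) (j ℓ : ℕ)
    (hℓj : ℓ + 1 ≤ j)
    (h1 : ¬ (p : ℤ) ∣ f.coeff j)
    (h2 : ∀ i, i < j → i ≠ ℓ → f.coeff i ≠ 0 →
      padicValInt p (f.coeff ℓ) * j ≤ padicValInt p (f.coeff i) * (j - ℓ))
    (h3 : Nat.gcd (padicValInt p (f.coeff ℓ)) (j - ℓ) = 1) :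
    ∀ f₁ f₂ : Polynomial ℤ, f = f₁ * f₂ →
      j - ℓ ≤ f₁.natDegree ∨ j - ℓ ≤ f₂.natDegree := by
  have : Fact p.Prime := ⟨hp⟩
  intro f₁ f₂ hf
  by_contra! hdeg
  have haj : f.coeff j ≠ 0 := fun h₀ => h1 (h₀ ▸ dvd_zero _)
  have hf₁ : f₁ ≠ 0 := by rintro rfl; simp_all
  have hf₂ : f₂ ≠ 0 := by rintro rfl; simp_all
  by_cases haℓ : f.coeff ℓ = 0
  · -- then `gcd 0 (j - ℓ) = 1` forces `j - ℓ = 1`, so both factors are constants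
    have hd : j - ℓ = 1 := by simpa [haℓ] using h3
    have := le_natDegree_of_ne_zero haj
    have := hf ▸ natDegree_mul_le (p := f₁) (q := f₂)
    omega
  set m := padicValInt p (f.coeff ℓ)
  have hcop : Nat.Coprime (j - ℓ) m := Nat.coprime_comm.mp h3
  have hunique : HasUniqueMinSlopeWeight p (j - ℓ) m f := hf ▸
    (hasUniqueMinSlopeWeight_of_natDegree_lt hcop hf₁ hdeg.1).mul (by omega)
      (hasUniqueMinSlopeWeight_of_natDegree_lt hcop hf₂ hdeg.2)
  have hwℓ : slopeWeight p (j - ℓ) m f ℓ = m * j := slopeWeight_self_sub (by omega)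
  have hwj : slopeWeight p (j - ℓ) m f j = m * j := by
    simp [slopeWeight, padicValInt.eq_zero_of_not_dvd h1]
  have := hunique.eq_of_slopeWeight_eq (mem_support_iff.mpr haℓ) (mem_support_iff.mpr haj)
    hwℓ hwj fun i => le_slopeWeight_of_valuation_bound (by omega) h2
  omega

/-- Corollary 1 of the paper specialized to ℤ. -/
theorem dumas_general_factor_degree_cor (p : ℕ) (hp : p.Prime) (f : Polynomial ℤ) (n : ℕ)
    (hn : f.natDegree = n) (hprim : f.IsPrimitive) (j ℓ : ℕ)
    (hℓj : ℓ + 1 ≤ j) (hjn : j ≤ n)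
    (h1 : ¬ (p : ℤ) ∣ f.coeff j)
    (h2 : ∀ i, i < j → i ≠ ℓ → f.coeff i ≠ 0 →
      padicValInt p (f.coeff ℓ) * j ≤ padicValInt p (f.coeff i) * (j - ℓ))
    (h3 : Nat.gcd (padicValInt p (f.coeff ℓ)) (j - ℓ) = 1) :
    ∀ f₁ f₂ : Polynomial ℤ, f = f₁ * f₂ →
      j - ℓ ≤ f₁.natDegree ∨ j - ℓ ≤ f₂.natDegree :=
  dumas_general_factor_degree_cor_general p hp f j ℓ hℓj h1 h2 h3
end

section
/- Let p be a prime and f = a_0 + a_1 x + ... + a_n x^n ∈ ℤ[x] with a_0 ≠ 0, and suppose there exists an index j with 1 ≤ j ≤ n such that (i) p ∤ a_j, (ii) v_p(a_0)/j < v_p(a_i)/(j-i) for each i = 1, ..., j-1 with a_i ≠ 0, and (iii) gcd(v_p(a_0), j) = 1. Then for any factorization f = f₁ f₂ in ℤ[x], either v_p(f₁(0)) = v_p(a_0) or v_p(f₂(0)) = v_p(a_0). -/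
/-!
Newton polygon argument. Give the coefficient `aᵢ` the weight `j·v(aᵢ) + m·i`, where
`m = v(a₀)`. Hypothesis (ii) says that every weight of `f` is at least `j·m`, and this minimum is
attained at `0` and, since `p ∤ a_j`, at `j`. The largest index of minimal weight is additive
under multiplication: in the product, the term built from the largest minimizers `l₁, l₂` of the
factors strictly dominates all others in coefficient `l₁ + l₂`. Writing `β + γ = m` for the
valuations of the constant terms of the factors, comparing weights forces the minimal weights of
the factors to be `j·β` and `j·γ`; as `gcd(m, j) = 1`, this makes `l₁` and `l₂` multiples `k₁·j`,
`k₂·j` with `m·k₁ ≤ β` and `m·k₂ ≤ γ`, while `l₁ + l₂ ≥ j`. So some `kᵢ ≥ 1`, and the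
corresponding valuation is `m`.
-/

open Polynomial

def IsLastArgmin (F : ℕ → ℕ∞) (l : ℕ) : Prop :=
  (∀ a, F l ≤ F a) ∧ ∀ a, l < a → F l < F a

namespace IsLastArgmin

variable {F G : ℕ → ℕ∞} {l₁ l₂ : ℕ}

theorem ne_top (h : IsLastArgmin F l₁) : F l₁ ≠ ⊤ :=
  (h.2 _ l₁.lt_succ_self).ne_top

theorem add_lt_add (h₁ : IsLastArgmin F l₁) (h₂ : IsLastArgmin G l₂) {a b : ℕ}
    (hab : l₁ < a ∨ l₂ < b) : F l₁ + G l₂ < F a + G b := by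
  rcases hab with ha | hb
  · exact ENat.add_lt_add_of_lt_of_le h₂.ne_top (h₁.2 a ha) (h₂.1 b)
  · exact ENat.add_lt_add_of_le_of_lt h₁.ne_top (h₁.1 a) (h₂.2 b hb)

end IsLastArgmin

theorem exists_isLastArgmin {F : ℕ → ℕ∞} {d : ℕ} (htop : ∀ a, d < a → F a = ⊤)
    (hfin : ∃ a, F a ≠ ⊤) : ∃ l, IsLastArgmin F l := by
  classical
  obtain ⟨a, ha⟩ := hfin
  set a₀ := Function.argmin F
  have hmin : ∀ b, F a₀ ≤ F b := fun b => Function.argmin_le F b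
  have ha₀ : a₀ ≤ d := by
    by_contra! h
    exact ha (top_le_iff.1 (htop a₀ h ▸ hmin a))
  set l := Nat.findGreatest (fun a => ∀ b, F a ≤ F b) d
  have hl : ∀ b, F l ≤ F b := Nat.findGreatest_spec (P := fun a => ∀ b, F a ≤ F b) ha₀ hmin
  refine ⟨l, hl, fun b hb => ?_⟩
  by_cases hbd : b ≤ d
  · obtain ⟨c, hc⟩ := not_forall.1 (Nat.findGreatest_is_greatest hb hbd)
    exact (hl c).trans_lt (not_le.1 hc)
  · rw [htop b (not_le.1 hbd)]
    exact (hl a).trans_lt (lt_top_iff_ne_top.2 ha)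

namespace Polynomial

variable {R : Type*} [Ring R] (v : AddValuation R ℕ∞) (j m : ℕ)

/-- `j` times the value at `0` of the line of slope `-m / j` through the point `(i, v (g.coeff i))`
of the Newton diagram of `g`. -/
def newtonWeight (g : R[X]) (i : ℕ) : ℕ∞ :=
  j * v (g.coeff i) + (m * i : ℕ)

variable {v j m}

theorem newtonWeight_coeff_mul_coeff (g₁ g₂ : R[X]) {a b c : ℕ} (h : a + b = c) :
    j * v (g₁.coeff a * g₂.coeff b) + (m * c : ℕ) =
      newtonWeight v j m g₁ a + newtonWeight v j m g₂ b := by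
  subst h
  simp only [newtonWeight, AddValuation.map_mul]
  push_cast
  ring

theorem exists_newtonWeight_add_le (g₁ g₂ : R[X]) (c : ℕ) : ∃ a b, a + b = c ∧
    newtonWeight v j m g₁ a + newtonWeight v j m g₂ b ≤ newtonWeight v j m (g₁ * g₂) c := by
  obtain ⟨x, hx, hmin⟩ := Finset.exists_min_image (Finset.HasAntidiagonal.antidiagonal c)
    (fun x => v (g₁.coeff x.1 * g₂.coeff x.2)) ⟨(0, c), by simp⟩
  have hxc : x.1 + x.2 = c := Finset.HasAntidiagonal.mem_antidiagonal.1 hx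
  refine ⟨x.1, x.2, hxc, ?_⟩
  rw [← newtonWeight_coeff_mul_coeff g₁ g₂ hxc, newtonWeight, coeff_mul]
  gcongr
  exact AddValuation.map_le_sum v hmin

theorem exists_isLastArgmin_newtonWeight (hj : j ≠ 0) {g : R[X]} (hg : ∃ i, v (g.coeff i) ≠ ⊤) :
    ∃ l, IsLastArgmin (newtonWeight v j m g) l := by
  refine exists_isLastArgmin (d := g.natDegree) (fun a ha => ?_) ?_
  · simp [newtonWeight, coeff_eq_zero_of_natDegree_lt ha, hj]
  · obtain ⟨i, hi⟩ := hg
    exact ⟨i, WithTop.add_ne_top.2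
      ⟨WithTop.mul_ne_top (ENat.natCast_ne_top j) hi, ENat.natCast_ne_top _⟩⟩

@[simp]
theorem newtonWeight_zero (g : R[X]) : newtonWeight v j m g 0 = j * v (g.coeff 0) := by
  simp [newtonWeight]

variable {g₁ g₂ : R[X]} {l₁ l₂ : ℕ}

theorem newtonWeight_mul_add_of_isLastArgmin (hj : j ≠ 0)
    (h₁ : IsLastArgmin (newtonWeight v j m g₁) l₁) (h₂ : IsLastArgmin (newtonWeight v j m g₂) l₂) :
    newtonWeight v j m (g₁ * g₂) (l₁ + l₂) =
      newtonWeight v j m g₁ l₁ + newtonWeight v j m g₂ l₂ := by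
  set t : ℕ × ℕ → R := fun x => g₁.coeff x.1 * g₂.coeff x.2
  have hmem : (l₁, l₂) ∈ Finset.HasAntidiagonal.antidiagonal (l₁ + l₂) := by simp
  have hlt : ∀ x ∈ (Finset.HasAntidiagonal.antidiagonal (l₁ + l₂)).erase (l₁, l₂),
      v (t (l₁, l₂)) < v (t x) := by
    rintro ⟨a, b⟩ hx
    obtain ⟨hne, hab⟩ := Finset.mem_erase.1 hx
    rw [Finset.HasAntidiagonal.mem_antidiagonal] at hab
    have hW := h₁.add_lt_add h₂ (a := a) (b := b) (by grind)
    rw [← newtonWeight_coeff_mul_coeff g₁ g₂ rfl, ← newtonWeight_coeff_mul_coeff g₁ g₂ hab] at hW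
    exact lt_of_not_ge fun hle => hW.not_ge (by gcongr)
  have ht : v (t (l₁, l₂)) ≠ ⊤ := by
    intro htop
    have hS := (ENat.add_lt_top.2 ⟨h₁.ne_top.lt_top, h₂.ne_top.lt_top⟩).ne
    rw [← newtonWeight_coeff_mul_coeff g₁ g₂ rfl, htop] at hS
    simp [hj] at hS
  rw [newtonWeight, coeff_mul, ← Finset.add_sum_erase _ _ hmem,
    AddValuation.map_add_eq_of_lt_left v (AddValuation.map_lt_sum v ht hlt)]
  exact newtonWeight_coeff_mul_coeff g₁ g₂ rfl

theorem _root_.IsLastArgmin.newtonWeight_mul (hj : j ≠ 0)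
    (h₁ : IsLastArgmin (newtonWeight v j m g₁) l₁) (h₂ : IsLastArgmin (newtonWeight v j m g₂) l₂) :
    IsLastArgmin (newtonWeight v j m (g₁ * g₂)) (l₁ + l₂) := by
  rw [IsLastArgmin, newtonWeight_mul_add_of_isLastArgmin hj h₁ h₂]
  constructor
  · intro c
    obtain ⟨a, b, -, hab⟩ := exists_newtonWeight_add_le (v := v) (j := j) (m := m) g₁ g₂ c
    exact (add_le_add (h₁.1 a) (h₂.1 b)).trans hab
  · intro c hc
    obtain ⟨a, b, rfl, hab⟩ := exists_newtonWeight_add_le (v := v) (j := j) (m := m) g₁ g₂ c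
    exact (h₁.add_lt_add h₂ (by omega)).trans_le hab

theorem exists_eq_mul_of_newtonWeight_eq (hj : j ≠ 0) (hcop : j.Coprime m) {g : R[X]} {l β : ℕ}
    (h : newtonWeight v j m g l = (j * β : ℕ)) : ∃ k, l = j * k ∧ m * k ≤ β := by
  have hv : v (g.coeff l) ≠ ⊤ := by
    intro htop
    rw [newtonWeight, htop, ENat.mul_top (by simpa using hj), top_add] at h
    exact ENat.natCast_ne_top _ h.symm
  obtain ⟨u, hu⟩ := ENat.ne_top_iff_exists.1 hv
  rw [newtonWeight, ← hu] at h
  norm_cast at h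
  obtain ⟨k, rfl⟩ : j ∣ l :=
    hcop.dvd_of_dvd_mul_left ((Nat.dvd_add_right (dvd_mul_right j u)).1 (h ▸ dvd_mul_right j β))
  refine ⟨k, rfl, ?_⟩
  have : j * (u + m * k) = j * β := by rw [← h]; ring
  have := Nat.eq_of_mul_eq_mul_left (Nat.pos_of_ne_zero hj) this
  omega

theorem newtonWeight_eq_of_isLastArgmin (hj : j ≠ 0) {f g₁ g₂ : R[X]} (hf : f = g₁ * g₂)
    {β γ : ℕ} (hβ : v (g₁.coeff 0) = β) (hγ : v (g₂.coeff 0) = γ)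
    (hle : ∀ i, ((j * (β + γ) : ℕ) : ℕ∞) ≤ newtonWeight v j m f i)
    (hl₁ : IsLastArgmin (newtonWeight v j m g₁) l₁)
    (hl₂ : IsLastArgmin (newtonWeight v j m g₂) l₂) :
    newtonWeight v j m g₁ l₁ = (j * β : ℕ) ∧ newtonWeight v j m g₂ l₂ = (j * γ : ℕ) := by
  obtain ⟨w₁, hw₁⟩ := ENat.ne_top_iff_exists.1 hl₁.ne_top
  obtain ⟨w₂, hw₂⟩ := ENat.ne_top_iff_exists.1 hl₂.ne_top
  have hle₁ : w₁ ≤ j * β := by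
    have := hl₁.1 0
    rw [newtonWeight_zero, hβ, ← hw₁] at this
    exact_mod_cast this
  have hle₂ : w₂ ≤ j * γ := by
    have := hl₂.1 0
    rw [newtonWeight_zero, hγ, ← hw₂] at this
    exact_mod_cast this
  have hlower : j * (β + γ) ≤ w₁ + w₂ := by
    have := hle (l₁ + l₂)
    rw [hf, newtonWeight_mul_add_of_isLastArgmin hj hl₁ hl₂, ← hw₁, ← hw₂] at this
    exact_mod_cast this
  rw [← hw₁, ← hw₂, mul_add] at *
  constructor <;> congr 1 <;> omega

theorem valuation_coeff_zero_eq_of_mul_eq (hj : j ≠ 0) (hcop : j.Coprime m) {f g₁ g₂ : R[X]}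
    (hf : f = g₁ * g₂) (h0 : v (f.coeff 0) = m) (hvj : v (f.coeff j) = 0)
    (hle : ∀ i, ((j * m : ℕ) : ℕ∞) ≤ newtonWeight v j m f i) :
    v (g₁.coeff 0) = m ∨ v (g₂.coeff 0) = m := by
  rw [hf, mul_coeff_zero, AddValuation.map_mul] at h0
  have hfin := ENat.add_lt_top.1 (h0 ▸ WithTop.natCast_lt_top m)
  obtain ⟨β, hβ⟩ := ENat.ne_top_iff_exists.1 hfin.1.ne
  obtain ⟨γ, hγ⟩ := ENat.ne_top_iff_exists.1 hfin.2.ne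
  obtain rfl : β + γ = m := by
    rw [← hβ, ← hγ] at h0
    exact_mod_cast h0
  obtain ⟨l₁, hl₁⟩ :=
    exists_isLastArgmin_newtonWeight (m := β + γ) hj ⟨0, hβ ▸ ENat.natCast_ne_top β⟩
  obtain ⟨l₂, hl₂⟩ :=
    exists_isLastArgmin_newtonWeight (m := β + γ) hj ⟨0, hγ ▸ ENat.natCast_ne_top γ⟩
  obtain ⟨he₁, he₂⟩ := newtonWeight_eq_of_isLastArgmin hj hf hβ.symm hγ.symm hle hl₁ hl₂
  have hjl : j ≤ l₁ + l₂ := by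
    by_contra! h
    have := (hl₁.newtonWeight_mul hj hl₂).2 j h
    have hfj : newtonWeight v j (β + γ) f j = ((β + γ) * j : ℕ) := by
      simp [newtonWeight, hvj]
    rw [newtonWeight_mul_add_of_isLastArgmin hj hl₁ hl₂, ← hf, hfj, he₁, he₂] at this
    have : j * β + j * γ < (β + γ) * j := by exact_mod_cast this
    linarith
  obtain ⟨k₁, rfl, hk₁⟩ := exists_eq_mul_of_newtonWeight_eq hj hcop he₁
  obtain ⟨k₂, rfl, hk₂⟩ := exists_eq_mul_of_newtonWeight_eq hj hcop he₂
  have hk : 1 ≤ k₁ + k₂ :=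
    Nat.le_of_mul_le_mul_left (by rw [mul_add]; omega) (Nat.pos_of_ne_zero hj)
  rw [← hβ, ← hγ]
  suffices β = β + γ ∨ γ = β + γ by exact_mod_cast this
  rcases Nat.eq_zero_or_pos k₁ with rfl | hk₁'
  · right
    nlinarith
  · left
    nlinarith

end Polynomial

theorem emultiplicity_eq_padicValInt {p : ℕ} (hp : p.Prime) {z : ℤ} (hz : z ≠ 0) :
    emultiplicity (p : ℤ) z = padicValInt p z := by
  have hfin : FiniteMultiplicity (p : ℤ) z :=
    Int.finiteMultiplicity_iff.2 ⟨by simpa using hp.ne_one, hz⟩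
  rw [hfin.emultiplicity_eq_multiplicity, padicValInt.of_ne_one_ne_zero hp.ne_one hz]

theorem mul_padicValInt_le_newtonWeight {p : ℕ} (hp : p.Prime) {f : ℤ[X]} {j : ℕ}
    (hslope : ∀ i, 1 ≤ i → i < j → f.coeff i ≠ 0 →
      padicValInt p (f.coeff 0) * (j - i) < padicValInt p (f.coeff i) * j) (i : ℕ) :
    ((j * padicValInt p (f.coeff 0) : ℕ) : ℕ∞) ≤
      newtonWeight (multiplicity_addValuation (Nat.prime_iff_prime_int.1 hp)) j
        (padicValInt p (f.coeff 0)) f i := by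
  set m := padicValInt p (f.coeff 0)
  by_cases hi : f.coeff i = 0
  · rcases eq_or_ne j 0 with rfl | hj
    · simp
    · simp [newtonWeight, hi, hj]
  rw [newtonWeight, multiplicity_addValuation_apply, emultiplicity_eq_padicValInt hp hi]
  norm_cast
  rcases Nat.lt_or_ge i j with hij | hji
  · rcases Nat.eq_zero_or_pos i with rfl | hi0
    · simp [m, mul_comm]
    have hlt := hslope i hi0 hij hi
    have hsplit : m * (j - i) + m * i = m * j := by rw [← mul_add, Nat.sub_add_cancel hij.le]
    nlinarith
  · nlinarith [Nat.mul_le_mul_left m hji]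

theorem valuation_constant_term_of_factor_general (p : ℕ) (hp : p.Prime) (f : Polynomial ℤ)
    (ha0 : f.coeff 0 ≠ 0) (j : ℕ)
    (hj1 : 1 ≤ j)
    (h1 : ¬ (p : ℤ) ∣ f.coeff j)
    (h2 : ∀ i, 1 ≤ i → i < j → f.coeff i ≠ 0 →
      padicValInt p (f.coeff 0) * (j - i) < padicValInt p (f.coeff i) * j)
    (h3 : Nat.gcd (padicValInt p (f.coeff 0)) j = 1) :
    ∀ f₁ f₂ : Polynomial ℤ, f = f₁ * f₂ →
      padicValInt p (f₁.eval 0) = padicValInt p (f.coeff 0) ∨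
      padicValInt p (f₂.eval 0) = padicValInt p (f.coeff 0) := by
  intro f₁ f₂ hf
  obtain ⟨hb0, hc0⟩ : f₁.coeff 0 ≠ 0 ∧ f₂.coeff 0 ≠ 0 := by
    rw [← mul_ne_zero_iff, ← mul_coeff_zero, ← hf]
    exact ha0
  have key := valuation_coeff_zero_eq_of_mul_eq (by omega) (Nat.Coprime.symm h3) hf
    (by simp [emultiplicity_eq_padicValInt hp ha0]) (by simpa using emultiplicity_eq_zero.2 h1)
    (mul_padicValInt_le_newtonWeight hp h2)
  rw [← coeff_zero_eq_eval_zero, ← coeff_zero_eq_eval_zero]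
  simpa [emultiplicity_eq_padicValInt hp hb0, emultiplicity_eq_padicValInt hp hc0] using key

/-- Lemma 3 of the paper specialized to ℤ: the p-adic valuation of the constant
term of one of the factors equals that of the constant term of f. -/
theorem valuation_constant_term_of_factor (p : ℕ) (hp : p.Prime) (f : Polynomial ℤ) (n : ℕ)
    (hn : f.natDegree = n) (ha0 : f.coeff 0 ≠ 0) (j : ℕ)
    (hj1 : 1 ≤ j) (hjn : j ≤ n)
    (h1 : ¬ (p : ℤ) ∣ f.coeff j)
    (h2 : ∀ i, 1 ≤ i → i < j → f.coeff i ≠ 0 →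
      padicValInt p (f.coeff 0) * (j - i) < padicValInt p (f.coeff i) * j)
    (h3 : Nat.gcd (padicValInt p (f.coeff 0)) j = 1) :
    ∀ f₁ f₂ : Polynomial ℤ, f = f₁ * f₂ →
      padicValInt p (f₁.eval 0) = padicValInt p (f.coeff 0) ∨
      padicValInt p (f₂.eval 0) = padicValInt p (f.coeff 0) :=
  valuation_constant_term_of_factor_general p hp f ha0 j hj1 h1 h2 h3
end

section
/- Let f = a_0 + a_1 x + ... + a_n x^n ∈ ℤ[x] a primitive polynomial with a_0 = ± p^k d for a prime p, positive integers k and d with p ∤ d. Suppose there is a positive integer m with km+1 ≤ n such that v_p(a_{(k-t)m+s}) = t for every s = 1, ..., m and t = 1, ..., k, and p ∤ a_{km+1}. If either km+1 = n, or every complex zero θ of f satisfies |θ| > d, then f is irreducible in ℤ[x]. -/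
/-!
Newton polygon argument. Give the term `a_i x^i` the weight `N v_p(a_i) + k i` with `N = km + 1`.
The layer conditions say that the least weight `Nk` is attained at `i = 0` and `i = N` and
nowhere beyond `N`: the Newton polygon of `f` starts with the edge from `(0, k)` to `(N, 0)`.
Under multiplication the least weights add, and so do the first and the last indices attaining
them, so the corresponding edges of the factors `g`, `h` of `f = g h` add up to this edge. Since
`gcd(N, k) = 1` the edge contains no other lattice point, so one factor, say `g`, carries all of
it: `deg g ≥ N` and `p ∤ h(0)`. Then `h(0) ∣ d`. If `n = N` this forces `h` to be constant;
otherwise `h` would have a complex root, and `|h(0)| ≥ ∏ |θ| > d` over its roots. So `h` is a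
constant dividing the primitive `f`, i.e. a unit.
-/

open Polynomial Finset

lemma emultiplicity_eq_padicValInt_s6 {p : ℕ} [Fact p.Prime] {c : ℤ} (hc : c ≠ 0) :
    emultiplicity (p : ℤ) c = padicValInt p c := by
  rw [← Int.emultiplicity_natAbs, padicValInt,
    padicValNat_eq_emultiplicity (Int.natAbs_ne_zero.mpr hc)]

lemma emultiplicity_pow_mul_of_not_dvd {R : Type*} [CommRing R] [IsDomain R] {p d : R}
    (hp : Prime p) (hd : ¬ p ∣ d) (k : ℕ) : emultiplicity p (p ^ k * d) = k := by
  rw [emultiplicity_mul hp, emultiplicity_pow_self_of_prime hp, emultiplicity_eq_zero.mpr hd,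
    add_zero]

lemma Nat.eq_zero_or_eq_of_coprime {N k a α β : ℕ} (hcop : N.Coprime k) (ha : a ≤ N)
    (h : N * α = N * β + k * a) : a = 0 ∨ (a = N ∧ α = β + k) := by
  have hdvd : N ∣ a := hcop.dvd_of_dvd_mul_left <|
    (Nat.dvd_add_right (dvd_mul_right N β)).mp (h ▸ dvd_mul_right N α)
  obtain rfl | hpos := Nat.eq_zero_or_pos a
  · exact .inl rfl
  obtain rfl : a = N := le_antisymm ha (Nat.le_of_dvd hpos hdvd)
  refine .inr ⟨rfl, Nat.eq_of_mul_eq_mul_left hpos ?_⟩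
  rw [h]; ring

lemma exists_layer {k m i : ℕ} (hi : 1 ≤ i) (hik : i ≤ k * m) :
    ∃ t s, 1 ≤ t ∧ t ≤ k ∧ 1 ≤ s ∧ s ≤ m ∧ (k - t) * m + s = i := by
  have hm : 0 < m := Nat.pos_of_ne_zero (by rintro rfl; omega)
  obtain ⟨q, r, hr, hqr⟩ : ∃ q r, r < m ∧ q * m + r = i - 1 :=
    ⟨(i - 1) / m, (i - 1) % m, Nat.mod_lt _ hm, Nat.div_add_mod' _ _⟩
  have hq : q < k := by
    by_contra! h
    have := Nat.mul_le_mul_right m h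
    omega
  exact ⟨k - q, r + 1, by omega, by omega, by omega, by omega,
    by rw [Nat.sub_sub_self hq.le]; omega⟩

namespace Polynomial

section NewtonEdge

variable {R : Type*} [CommRing R] (v : AddValuation R ℕ∞) (N k : ℕ)

/-- Points `(i, v(q_i))` of equal weight lie on a line of slope `-k / N`. -/
def termVal (q : R[X]) (i : ℕ) : ℕ∞ := N * v (q.coeff i) + ↑(k * i)

/-- The Newton polygon of `q` has the edge `[a, a']` of slope `-k / N` (a single vertex if
`a = a'`), lying on the line of weight `B`. -/
structure IsNewtonEdge (q : R[X]) (B : ℕ∞) (a a' : ℕ) : Prop where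
  ne_top : B ≠ ⊤
  le_termVal : ∀ i, B ≤ termVal v N k q i
  termVal_left : termVal v N k q a = B
  termVal_right : termVal v N k q a' = B
  lt_termVal_of_lt : ∀ i < a, B < termVal v N k q i
  lt_termVal_of_gt : ∀ i, a' < i → B < termVal v N k q i

variable {v N k} {q r : R[X]}

lemma termVal_mul_term (x y : ℕ) :
    N * v (q.coeff x * r.coeff y) + ↑(k * (x + y)) = termVal v N k q x + termVal v N k r y := by
  simp only [termVal, AddValuation.map_mul]
  push_cast
  ring

lemma exists_termVal_add_le_termVal_mul (i : ℕ) :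
    ∃ x y, x + y = i ∧ termVal v N k q x + termVal v N k r y ≤ termVal v N k (q * r) i := by
  obtain ⟨z, hz, hmin⟩ := (antidiagonal i).exists_min_image
    (fun z => v (q.coeff z.1 * r.coeff z.2)) ⟨(0, i), by simp⟩
  rw [HasAntidiagonal.mem_antidiagonal] at hz
  refine ⟨z.1, z.2, hz, ?_⟩
  rw [← termVal_mul_term, hz, termVal, coeff_mul]
  gcongr
  exact v.map_le_sum hmin

lemma termVal_mul_of_forall_lt {a b : ℕ}
    (h : ∀ x y, x + y = a + b → (x, y) ≠ (a, b) →
      termVal v N k q a + termVal v N k r b < termVal v N k q x + termVal v N k r y) :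
    termVal v N k (q * r) (a + b) = termVal v N k q a + termVal v N k r b := by
  classical
  have hab : (a, b) ∈ antidiagonal (a + b) := by simp
  rw [termVal, coeff_mul, ← add_sum_erase _ _ hab, ← termVal_mul_term]
  set rest := ∑ z ∈ (antidiagonal (a + b)).erase (a, b), q.coeff z.1 * r.coeff z.2
  obtain hrest | hrest := eq_or_ne rest 0
  · rw [hrest, add_zero]
  obtain ⟨z, hz, hmin⟩ := exists_min_image _ (fun z => v (q.coeff z.1 * r.coeff z.2))
    (nonempty_of_sum_ne_zero hrest)
  obtain ⟨hne, hz⟩ := mem_erase.mp hz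
  rw [HasAntidiagonal.mem_antidiagonal] at hz
  have hlt : v (q.coeff a * r.coeff b) < v (q.coeff z.1 * r.coeff z.2) := by
    have := h z.1 z.2 hz hne
    rw [← termVal_mul_term, ← termVal_mul_term, hz] at this
    by_contra! hle
    exact (this.trans_le (by gcongr)).false
  rw [v.map_add_eq_of_lt_left (hlt.trans_le (v.map_le_sum hmin))]

namespace IsNewtonEdge

variable {Bq Br : ℕ∞} {a a' b b' : ℕ}

lemma coeff_ne_zero (hN : N ≠ 0) (hq : IsNewtonEdge v N k q Bq a a') {i : ℕ}
    (hi : termVal v N k q i = Bq) : q.coeff i ≠ 0 := by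
  rintro h0
  exact hq.ne_top (by simp [← hi, termVal, h0, hN])

lemma add_lt_termVal_add (hq : IsNewtonEdge v N k q Bq a a') (hr : IsNewtonEdge v N k r Br b b')
    {x y : ℕ} (h : Bq < termVal v N k q x ∨ Br < termVal v N k r y) :
    Bq + Br < termVal v N k q x + termVal v N k r y := by
  obtain hx | hy := h
  · exact ENat.add_lt_add_of_lt_of_le hr.ne_top hx (hr.le_termVal y)
  · exact ENat.add_lt_add_of_le_of_lt hq.ne_top (hq.le_termVal x) hy

lemma lt_termVal_mul (hq : IsNewtonEdge v N k q Bq a a') (hr : IsNewtonEdge v N k r Br b b')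
    {i : ℕ} (h : ∀ x y, x + y = i → Bq < termVal v N k q x ∨ Br < termVal v N k r y) :
    Bq + Br < termVal v N k (q * r) i := by
  obtain ⟨x, y, hxy, hle⟩ := exists_termVal_add_le_termVal_mul (v := v) (N := N) (k := k)
    (q := q) (r := r) i
  exact (hq.add_lt_termVal_add hr (h x y hxy)).trans_le hle

lemma termVal_mul (hq : IsNewtonEdge v N k q Bq a a') (hr : IsNewtonEdge v N k r Br b b')
    {x₀ y₀ : ℕ} (hx₀ : termVal v N k q x₀ = Bq) (hy₀ : termVal v N k r y₀ = Br)
    (h : ∀ x y, x + y = x₀ + y₀ → (x, y) ≠ (x₀, y₀) →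
      Bq < termVal v N k q x ∨ Br < termVal v N k r y) :
    termVal v N k (q * r) (x₀ + y₀) = Bq + Br := by
  rw [termVal_mul_of_forall_lt, hx₀, hy₀]
  intro x y hxy hne
  rw [hx₀, hy₀]
  exact hq.add_lt_termVal_add hr (h x y hxy hne)

theorem mul (hq : IsNewtonEdge v N k q Bq a a') (hr : IsNewtonEdge v N k r Br b b') :
    IsNewtonEdge v N k (q * r) (Bq + Br) (a + b) (a' + b') where
  ne_top := by simp [hq.ne_top, hr.ne_top]
  le_termVal i := by
    obtain ⟨x, y, -, hxy⟩ := exists_termVal_add_le_termVal_mul (v := v) (N := N) (k := k)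
      (q := q) (r := r) i
    exact (add_le_add (hq.le_termVal x) (hr.le_termVal y)).trans hxy
  termVal_left := hq.termVal_mul hr hq.termVal_left hr.termVal_left fun x y hxy hne => by
    obtain hx | hy : x < a ∨ y < b := by
      by_contra!
      exact hne (Prod.ext (by omega) (by omega))
    exacts [.inl (hq.lt_termVal_of_lt x hx), .inr (hr.lt_termVal_of_lt y hy)]
  termVal_right := hq.termVal_mul hr hq.termVal_right hr.termVal_right fun x y hxy hne => by
    obtain hx | hy : a' < x ∨ b' < y := by
      by_contra!
      exact hne (Prod.ext (by omega) (by omega))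
    exacts [.inl (hq.lt_termVal_of_gt x hx), .inr (hr.lt_termVal_of_gt y hy)]
  lt_termVal_of_lt i hi := hq.lt_termVal_mul hr fun x y hxy => by
    obtain hx | hy : x < a ∨ y < b := by omega
    exacts [.inl (hq.lt_termVal_of_lt x hx), .inr (hr.lt_termVal_of_lt y hy)]
  lt_termVal_of_gt i hi := hq.lt_termVal_mul hr fun x y hxy => by
    obtain hx | hy : a' < x ∨ b' < y := by omega
    exacts [.inl (hq.lt_termVal_of_gt x hx), .inr (hr.lt_termVal_of_gt y hy)]

theorem unique {c c' : ℕ} (h₁ : IsNewtonEdge v N k q Bq a a')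
    (h₂ : IsNewtonEdge v N k q Br c c') : Bq = Br ∧ a = c ∧ a' = c' := by
  obtain rfl : Bq = Br :=
    le_antisymm (h₂.termVal_left ▸ h₁.le_termVal c) (h₁.termVal_left ▸ h₂.le_termVal a)
  refine ⟨rfl, ?_, ?_⟩
  · by_contra hne
    obtain h | h := Nat.lt_or_gt_of_ne hne
    · exact (h₂.lt_termVal_of_lt a h).ne h₁.termVal_left.symm
    · exact (h₁.lt_termVal_of_lt c h).ne h₂.termVal_left.symm
  · by_contra hne
    obtain h | h := Nat.lt_or_gt_of_ne hne
    · exact (h₁.lt_termVal_of_gt c' h).ne h₂.termVal_right.symm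
    · exact (h₂.lt_termVal_of_gt a' h).ne h₁.termVal_right.symm

end IsNewtonEdge

theorem exists_isNewtonEdge (hN : N ≠ 0) (h : ∃ i, termVal v N k q i ≠ ⊤) :
    ∃ B a a', IsNewtonEdge v N k q B a a' := by
  classical
  have hsupp : ∀ i, termVal v N k q i ≠ ⊤ → i ∈ q.support := fun i hi => by
    rw [mem_support_iff]; rintro h0; simp [termVal, h0, hN] at hi
  obtain ⟨i₀, hi₀⟩ := h
  obtain ⟨j, hj, hmin⟩ :=
    q.support.exists_min_image (termVal v N k q) ⟨i₀, hsupp i₀ hi₀⟩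
  set B := termVal v N k q j
  have hB : B ≠ ⊤ := ne_top_of_le_ne_top hi₀ (hmin i₀ (hsupp i₀ hi₀))
  have hle : ∀ i, B ≤ termVal v N k q i := fun i => by
    by_cases hi : termVal v N k q i = ⊤
    · exact hi ▸ le_top
    · exact hmin i (hsupp i hi)
  set S := q.support.filter (termVal v N k q · = B)
  have hS : S.Nonempty := ⟨j, mem_filter.mpr ⟨hj, rfl⟩⟩
  have hmemS : ∀ i, termVal v N k q i = B → i ∈ S := fun i hi =>
    mem_filter.mpr ⟨hsupp i (hi ▸ hB), hi⟩
  refine ⟨B, S.min' hS, S.max' hS, hB, hle, (mem_filter.mp (S.min'_mem hS)).2,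
    (mem_filter.mp (S.max'_mem hS)).2, fun i hi => ?_, fun i hi => ?_⟩
  · exact (hle i).lt_of_ne fun h => (S.min'_le i (hmemS i h.symm)).not_gt hi
  · exact (hle i).lt_of_ne fun h => (S.le_max' i (hmemS i h.symm)).not_gt hi

end NewtonEdge

section Int

variable {p : ℕ} [Fact p.Prime] (hp : Prime (p : ℤ))

lemma termVal_eq_of_coeff_ne_zero {N k : ℕ} {q : ℤ[X]} {i : ℕ} (hi : q.coeff i ≠ 0) :
    termVal (multiplicity_addValuation hp) N k q i =
      ↑(N * padicValInt p (q.coeff i) + k * i) := by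
  simp [termVal, emultiplicity_eq_padicValInt_s6 hi]

lemma IsNewtonEdge.padicValInt_eq {N k a : ℕ} {q : ℤ[X]} {B : ℕ∞} (hN : N ≠ 0)
    (hq : IsNewtonEdge (multiplicity_addValuation hp) N k q B 0 a) :
    B = ↑(N * padicValInt p (q.coeff 0)) ∧
      N * padicValInt p (q.coeff 0) = N * padicValInt p (q.coeff a) + k * a ∧
      q.coeff a ≠ 0 := by
  have hqa := hq.coeff_ne_zero hN hq.termVal_right
  have h0 := hq.termVal_left
  have ha := hq.termVal_right
  rw [termVal_eq_of_coeff_ne_zero hp (hq.coeff_ne_zero hN h0), mul_zero, add_zero] at h0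
  rw [termVal_eq_of_coeff_ne_zero hp hqa] at ha
  exact ⟨h0.symm, Nat.cast_inj.mp (h0.trans ha.symm), hqa⟩

theorem isNewtonEdge_of_layers {f : ℤ[X]} {k m : ℕ} (hk : 1 ≤ k)
    (h0 : emultiplicity (p : ℤ) (f.coeff 0) = k)
    (hlayers : ∀ t s, 1 ≤ t → t ≤ k → 1 ≤ s → s ≤ m →
      padicValInt p (f.coeff ((k - t) * m + s)) = t)
    (htop : ¬ (p : ℤ) ∣ f.coeff (k * m + 1)) :
    IsNewtonEdge (multiplicity_addValuation hp) (k * m + 1) k f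
      ↑((k * m + 1) * k) 0 (k * m + 1) := by
  set N := k * m + 1
  have hleft : termVal (multiplicity_addValuation hp) N k f 0 = ↑(N * k) := by
    simp [termVal, h0]
  have hright : termVal (multiplicity_addValuation hp) N k f N = ↑(N * k) := by
    simp [termVal, emultiplicity_eq_zero.mpr htop, mul_comm]
  have hgt : ∀ i, N < i → ↑(N * k) < termVal (multiplicity_addValuation hp) N k f i :=
    fun i hi => lt_of_lt_of_le (Nat.cast_lt.mpr <| (mul_comm N k).trans_lt <|
      Nat.mul_lt_mul_of_pos_left hi hk) le_add_self
  refine ⟨ENat.natCast_ne_top _, fun i => ?_, hleft, hright,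
    fun i hi => absurd hi (Nat.not_lt_zero i), hgt⟩
  obtain rfl | hi0 := Nat.eq_zero_or_pos i
  · exact hleft.ge
  obtain hi | hi := le_or_gt i (k * m)
  · obtain ⟨t, s, ht1, htk, hs1, hsm, rfl⟩ := exists_layer hi0 hi
    obtain hc | hc := eq_or_ne (f.coeff ((k - t) * m + s)) 0
    · simp [termVal, hc]
    rw [termVal_eq_of_coeff_ne_zero hp hc, hlayers t s ht1 htk hs1 hsm, Nat.cast_le]
    obtain ⟨u, rfl⟩ := Nat.exists_eq_add_of_le htk
    simp only [N, Nat.add_sub_cancel_left]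
    nlinarith
  obtain rfl | hi := eq_or_lt_of_le (show N ≤ i by omega)
  · exact hright.ge
  · exact (hgt i hi).le

theorem IsNewtonEdge.le_natDegree_and_not_dvd_coeff_zero {N k : ℕ} (hN : 0 < N)
    (hcop : N.Coprime k) {f g h : ℤ[X]}
    (hf : IsNewtonEdge (multiplicity_addValuation hp) N k f ↑(N * k) 0 N) (hgh : f = g * h)
    (hg0 : g.coeff 0 ≠ 0) (hh0 : h.coeff 0 ≠ 0) :
    (N ≤ g.natDegree ∧ ¬ (p : ℤ) ∣ h.coeff 0) ∨
      (N ≤ h.natDegree ∧ ¬ (p : ℤ) ∣ g.coeff 0) := by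
  obtain ⟨Bg, ag, ag', hg⟩ := exists_isNewtonEdge (v := multiplicity_addValuation hp) (k := k)
    (q := g) hN.ne' ⟨0, by rw [termVal_eq_of_coeff_ne_zero hp hg0]; exact ENat.natCast_ne_top _⟩
  obtain ⟨Bh, bh, bh', hh⟩ := exists_isNewtonEdge (v := multiplicity_addValuation hp) (k := k)
    (q := h) hN.ne' ⟨0, by rw [termVal_eq_of_coeff_ne_zero hp hh0]; exact ENat.natCast_ne_top _⟩
  obtain ⟨hB, hab, hab'⟩ := (hg.mul hh).unique (hgh ▸ hf)
  obtain ⟨rfl, rfl⟩ : ag = 0 ∧ bh = 0 := by omega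
  obtain ⟨rfl, hg', hga⟩ := hg.padicValInt_eq hp hN.ne'
  obtain ⟨rfl, hh', hhb⟩ := hh.padicValInt_eq hp hN.ne'
  have hα : padicValInt p (g.coeff 0) + padicValInt p (h.coeff 0) = k :=
    Nat.eq_of_mul_eq_mul_left hN (by rw [mul_add]; exact_mod_cast hB)
  have hnot_dvd {c : ℤ} (hc : c ≠ 0) (hv : padicValInt p c = 0) : ¬ (p : ℤ) ∣ c :=
    fun hdvd => ((padicValInt_dvd_iff 1 c).mp (by rwa [pow_one])).elim hc fun h1 => by omega
  obtain hg'' | ⟨rfl, hg''⟩ := Nat.eq_zero_or_eq_of_coprime hcop (by omega) hg' <;>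
  obtain hh'' | ⟨rfl, hh''⟩ := Nat.eq_zero_or_eq_of_coprime hcop (by omega) hh'
  · omega
  · exact .inr ⟨le_natDegree_of_ne_zero hhb, hnot_dvd hg0 (by omega)⟩
  · exact .inl ⟨le_natDegree_of_ne_zero hga, hnot_dvd hh0 (by omega)⟩
  · omega

end Int

lemma natDegree_eq_zero_of_forall_norm_root_gt {h : ℤ[X]} {c : ℝ} (hc : 1 ≤ c)
    (h0 : |(h.coeff 0 : ℝ)| ≤ c) (hroots : ∀ θ : ℂ, aeval θ h = 0 → c < ‖θ‖) :
    h.natDegree = 0 := by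
  by_contra hdeg
  set H := h.map (algebraMap ℤ ℂ)
  have hH : H.Splits := IsAlgClosed.splits H
  have hcard : H.roots.card ≠ 0 := by
    rwa [← hH.natDegree_eq_card_roots, natDegree_map_eq_of_injective (RingHom.injective_int _)]
  obtain ⟨θ, hθ⟩ := Multiset.card_pos_iff_exists_mem.mp (Nat.pos_of_ne_zero hcard)
  obtain ⟨s, hs⟩ := Multiset.exists_cons_of_mem hθ
  have hroot : ∀ z ∈ H.roots, c < ‖z‖ := fun z hz =>
    hroots z (by rw [aeval_def, ← eval_map]; exact isRoot_of_mem_roots hz)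
  have hlead : 1 ≤ ‖H.leadingCoeff‖ := by
    have hh : h ≠ 0 := by rintro rfl; exact hdeg natDegree_zero
    rw [leadingCoeff_map_of_injective (RingHom.injective_int _), algebraMap_int_eq,
      eq_intCast, Complex.norm_intCast]
    exact_mod_cast Int.one_le_abs (leadingCoeff_ne_zero.mpr hh)
  have hprod : ‖H.eval 0‖ = ‖H.leadingCoeff‖ * (H.roots.map (‖·‖)).prod := by
    rw [hH.eval_eq_prod_roots, norm_mul, ← normHom_apply (_ : Multiset ℂ).prod,
      map_multiset_prod, Multiset.map_map]
    simp
  have := calc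
    c < ‖θ‖ := hroot θ hθ
    _ ≤ ‖θ‖ * (s.map (‖·‖)).prod := le_mul_of_one_le_right (norm_nonneg _) <|
        Multiset.one_le_prod fun x hx => by
          obtain ⟨z, hz, rfl⟩ := Multiset.mem_map.mp hx
          exact hc.trans (hroot z (hs ▸ Multiset.mem_cons_of_mem hz)).le
    _ = (H.roots.map (‖·‖)).prod := by rw [hs, Multiset.map_cons, Multiset.prod_cons]
    _ ≤ ‖H.eval 0‖ := hprod ▸ le_mul_of_one_le_left (Multiset.prod_nonneg fun x hx => by
        obtain ⟨z, -, rfl⟩ := Multiset.mem_map.mp hx; exact norm_nonneg z) hlead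
    _ = |(h.coeff 0 : ℝ)| := by simp [H, eval_map]
  linarith

lemma coeff_zero_dvd_of_not_dvd {f g h : ℤ[X]} {p : ℤ} (hp : Prime p) {k : ℕ} {d : ℤ}
    (hf0 : f.coeff 0 = p ^ k * d ∨ f.coeff 0 = -(p ^ k * d)) (hgh : f = g * h)
    (hh : ¬ p ∣ h.coeff 0) : h.coeff 0 ∣ d := by
  have hf : h.coeff 0 ∣ f.coeff 0 := by rw [hgh, mul_coeff_zero]; exact dvd_mul_left _ _
  have hdvd : h.coeff 0 ∣ p ^ k * d := by
    obtain h0 | h0 := hf0 <;> rw [h0] at hf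
    exacts [hf, dvd_neg.mp hf]
  exact ((hp.coprime_iff_not_dvd.mpr hh).symm.pow_right).dvd_of_dvd_mul_left hdvd

theorem isUnit_right_of_eq_mul {f g h : ℤ[X]} (hprim : f.IsPrimitive) (hgh : f = g * h) {d : ℕ}
    (hd : 1 ≤ d) (hh0 : h.coeff 0 ∣ d)
    (hdeg : f.natDegree ≤ g.natDegree ∨ ∀ θ : ℂ, aeval θ f = 0 → (d : ℝ) < ‖θ‖) :
    IsUnit h := by
  have hg : g ≠ 0 := by rintro rfl; exact hprim.ne_zero (by simp [hgh])
  have hh : h ≠ 0 := by rintro rfl; exact hprim.ne_zero (by simp [hgh])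
  have hdeg0 : h.natDegree = 0 := by
    obtain hdeg | hroots := hdeg
    · have := natDegree_mul hg hh
      rw [← hgh] at this
      omega
    refine natDegree_eq_zero_of_forall_norm_root_gt (by exact_mod_cast hd) ?_ fun θ hθ =>
      hroots θ (by rw [hgh, map_mul, hθ, mul_zero])
    have := Int.le_of_dvd (by omega) ((abs_dvd _ _).mpr hh0)
    exact_mod_cast this
  rw [eq_C_of_natDegree_eq_zero hdeg0, isUnit_C]
  exact hprim _ ⟨g, by rw [hgh, mul_comm, ← eq_C_of_natDegree_eq_zero hdeg0]⟩

end Polynomial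

theorem irreducible_cor4_general (p : ℕ) (hp : p.Prime) (f : Polynomial ℤ) (n : ℕ)
    (hn : f.natDegree = n) (hprim : f.IsPrimitive)
    (k d m : ℕ) (hk : 1 ≤ k) (hdpos : 1 ≤ d)
    (hpd : ¬ (p : ℤ) ∣ (d : ℤ))
    (ha0 : f.coeff 0 = (p : ℤ) ^ k * d ∨ f.coeff 0 = -((p : ℤ) ^ k * d))
    (hlayers : ∀ t s, 1 ≤ t → t ≤ k → 1 ≤ s → s ≤ m →
      padicValInt p (f.coeff ((k - t) * m + s)) = t)
    (htop : ¬ (p : ℤ) ∣ f.coeff (k * m + 1))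
    (hmain : k * m + 1 = n ∨ ∀ θ : ℂ, Polynomial.aeval θ f = 0 → (d : ℝ) < ‖θ‖) :
    Irreducible f := by
  have := Fact.mk hp
  have hpZ : Prime (p : ℤ) := Nat.prime_iff_prime_int.mp hp
  have h0 : emultiplicity (p : ℤ) (f.coeff 0) = k := by
    obtain h | h := ha0 <;>
      simp only [h, emultiplicity_neg, emultiplicity_pow_mul_of_not_dvd hpZ hpd]
  have hedge := isNewtonEdge_of_layers hpZ hk h0 hlayers htop
  refine ⟨fun hu => ?_, fun g h hgh => ?_⟩
  · have := le_natDegree_of_ne_zero (hedge.coeff_ne_zero (by omega) hedge.termVal_right)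
    rw [natDegree_eq_zero_of_isUnit hu] at this
    omega
  have hgh0 := hedge.coeff_ne_zero (by omega) hedge.termVal_left
  rw [hgh, mul_coeff_zero, mul_ne_zero_iff] at hgh0
  have hdeg (g : ℤ[X]) (hg : k * m + 1 ≤ g.natDegree) :
      f.natDegree ≤ g.natDegree ∨ ∀ θ : ℂ, aeval θ f = 0 → (d : ℝ) < ‖θ‖ :=
    hmain.imp (fun h => by omega) id
  rcases hedge.le_natDegree_and_not_dvd_coeff_zero hpZ (by omega) (by simp) hgh hgh0.1 hgh0.2 with
    ⟨hg, hph⟩ | ⟨hh, hpg⟩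
  · exact .inr (isUnit_right_of_eq_mul hprim hgh hdpos (coeff_zero_dvd_of_not_dvd hpZ ha0 hgh hph)
      (hdeg g hg))
  · have hhg := hgh.trans (mul_comm g h)
    exact .inl (isUnit_right_of_eq_mul hprim hhg hdpos (coeff_zero_dvd_of_not_dvd hpZ ha0 hhg hpg)
      (hdeg h hh))

/-- Corollary 4 of the paper: an Eisenstein-like layered divisibility criterion. -/
theorem irreducible_cor4 (p : ℕ) (hp : p.Prime) (f : Polynomial ℤ) (n : ℕ)
    (hn : f.natDegree = n) (hprim : f.IsPrimitive)
    (k d m : ℕ) (hk : 1 ≤ k) (hdpos : 1 ≤ d) (hm : 1 ≤ m)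
    (hpd : ¬ (p : ℤ) ∣ (d : ℤ))
    (ha0 : f.coeff 0 = (p : ℤ) ^ k * d ∨ f.coeff 0 = -((p : ℤ) ^ k * d))
    (hkm : k * m + 1 ≤ n)
    (hlayers : ∀ t s, 1 ≤ t → t ≤ k → 1 ≤ s → s ≤ m →
      padicValInt p (f.coeff ((k - t) * m + s)) = t)
    (htop : ¬ (p : ℤ) ∣ f.coeff (k * m + 1))
    (hmain : k * m + 1 = n ∨ ∀ θ : ℂ, Polynomial.aeval θ f = 0 → (d : ℝ) < ‖θ‖) :
    Irreducible f :=
  irreducible_cor4_general p hp f n hn hprim k d m hk hdpos hpd ha0 hlayers htop hmain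
end

section
/- Let f = a_0 + a_1 x + ... + a_n x^n ∈ ℤ[x] with a_0 ≥ a_1 ≥ ... ≥ a_n ≥ 1, and suppose f has no cyclotomic factor (equivalently, no zero of f is a root of unity). Then every complex zero θ of f satisfies |θ| > 1. -/
/-!
Multiplying `f(θ) = 0` by `1 - θ` and summing by parts writes `a₀` as `∑ (aᵢ - aᵢ₊₁) θ^(i+1)`,
a combination of the powers `θ^(i+1)` with nonnegative weights summing to `a₀`. If `|θ| ≤ 1`,
taking real parts forces every power with a positive weight to equal `1`; the last weight is
`aₙ ≥ 1`, so `θ^(n+1) = 1`.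
-/

open Polynomial Finset

theorem Finset.sum_range_sub_mul_pow_succ {R : Type*} [CommRing R] (a : ℕ → R) (x : R) (n : ℕ) :
    ∑ i ∈ range n, (a i - a (i + 1)) * x ^ (i + 1) =
      a 0 - a n * x ^ n - (1 - x) * ∑ i ∈ range n, a i * x ^ i := by
  induction n with
  | zero => simp
  | succ n ih => rw [sum_range_succ, sum_range_succ, ih]; ring

theorem Complex.eq_one_of_re_eq_one_of_norm_le_one {z : ℂ} (hre : z.re = 1) (hz : ‖z‖ ≤ 1) :
    z = 1 := by
  have hsq := Complex.sq_norm z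
  rw [Complex.normSq_apply, hre] at hsq
  have him : z.im = 0 := by nlinarith [norm_nonneg z, sq_nonneg z.im]
  exact Complex.ext hre him

theorem Complex.eq_one_of_sum_mul_eq_sum {ι : Type*} {s : Finset ι} {w : ι → ℝ} {z : ι → ℂ}
    (hw : ∀ i ∈ s, 0 ≤ w i) (hz : ∀ i ∈ s, ‖z i‖ ≤ 1)
    (h : ∑ i ∈ s, (w i : ℂ) * z i = ∑ i ∈ s, w i) {j : ι} (hj : j ∈ s) (hwj : 0 < w j) :
    z j = 1 := by
  have hdefect : ∑ i ∈ s, w i * (1 - (z i).re) = 0 := by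
    have hre := congrArg Complex.re h
    simp only [Complex.re_sum, Complex.re_ofReal_mul, Complex.ofReal_re] at hre
    simp only [mul_sub, mul_one, sum_sub_distrib, hre, sub_self]
  have hnonneg : ∀ i ∈ s, 0 ≤ w i * (1 - (z i).re) := fun i hi =>
    mul_nonneg (hw i hi) (by linarith [Complex.re_le_norm (z i), hz i hi])
  have hj0 := (sum_eq_zero_iff_of_nonneg hnonneg).1 hdefect j hj
  refine Complex.eq_one_of_re_eq_one_of_norm_le_one ?_ (hz j hj)
  linarith [(mul_eq_zero.1 hj0).resolve_left hwj.ne']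

theorem pow_succ_eq_one_of_sum_mul_pow_eq_zero {a : ℕ → ℝ} {n : ℕ}
    (hanti : ∀ i < n, a (i + 1) ≤ a i) (hzero : a (n + 1) = 0) (hpos : 0 < a n)
    {θ : ℂ} (hθ : ‖θ‖ ≤ 1) (hsum : ∑ i ∈ range (n + 1), (a i : ℂ) * θ ^ i = 0) :
    θ ^ (n + 1) = 1 := by
  have hw : ∀ i ∈ range (n + 1), 0 ≤ a i - a (i + 1) := by
    intro i hi
    rcases (Nat.lt_succ_iff.1 (mem_range.1 hi)).lt_or_eq with hi | rfl
    · exact sub_nonneg.2 (hanti i hi)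
    · rw [hzero, sub_zero]; exact hpos.le
  have hcomb : ∑ i ∈ range (n + 1), ((a i - a (i + 1) : ℝ) : ℂ) * θ ^ (i + 1) =
      ∑ i ∈ range (n + 1), (a i - a (i + 1)) := by
    push_cast
    rw [sum_range_sub_mul_pow_succ, hsum, sum_range_sub' (fun i => (a i : ℂ)), hzero]
    simp
  have hpow : ∀ i ∈ range (n + 1), ‖θ ^ (i + 1)‖ ≤ 1 := fun i _ => by
    rw [norm_pow]; exact pow_le_one₀ (norm_nonneg θ) hθ
  exact Complex.eq_one_of_sum_mul_eq_sum hw hpow hcomb (self_mem_range_succ n)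
    (by rw [hzero, sub_zero]; exact hpos)

/-- Remark (2), strengthened: decreasing positive integer coefficients and no
root of unity among the zeros force all complex zeros outside the closed unit disk. -/
theorem roots_outside_closed_unit_disk (f : Polynomial ℤ) (n : ℕ)
    (hn : f.natDegree = n)
    (hmono : ∀ i, i < n → f.coeff (i + 1) ≤ f.coeff i)
    (hlead : 1 ≤ f.coeff n)
    (hnocyc : ∀ θ : ℂ, Polynomial.aeval θ f = 0 → ∀ k : ℕ, 0 < k → θ ^ k ≠ 1) :
    ∀ θ : ℂ, Polynomial.aeval θ f = 0 → 1 < ‖θ‖ := by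
  intro θ hθ
  by_contra! hle
  have hsum : ∑ i ∈ range (n + 1), ((f.coeff i : ℝ) : ℂ) * θ ^ i = 0 := by
    rw [← hθ, aeval_eq_sum_range, hn]
    simp [zsmul_eq_mul]
  refine hnocyc θ hθ (n + 1) n.succ_pos (pow_succ_eq_one_of_sum_mul_pow_eq_zero
    (a := fun i => (f.coeff i : ℝ)) (fun i hi => by exact_mod_cast hmono i hi) ?_
    (by exact_mod_cast hlead) hle hsum)
  simp [coeff_eq_zero_of_natDegree_lt, hn]
end
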